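/- arXiv:2312.13464 — 9 statements merged into one kernel-verified Lean document; each statement's English description precedes it below -/
import Mathlib

section
/- For every nonempty set 𝒜 of tuples over E of length at most |E|, the ideal I_𝒜 of 𝔖⁺(E) is self-adjoint (closed under the involution *), and Δ(I_𝒜) ⊆ I_𝒜 ⊗ 𝔖⁺(E) + 𝔖⁺(E) ⊗ I_𝒜; consequently the coproduct Δ of 𝔖⁺(E) descends to a coproduct on the quotient 𝔊_𝒜 = 𝔖⁺(E)/I_𝒜, so that 𝔊_𝒜 is a quantum permutation group on E. -/
/-!
STATEMENT 2: For every nonempty set 𝒜 of tuples over E of length at most |E|, the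
ideal I_𝒜 of 𝔖⁺(E) is self-adjoint, and Δ(I_𝒜) ⊆ I_𝒜 ⊗ 𝔖⁺(E) + 𝔖⁺(E) ⊗ I_𝒜;
consequently the coproduct descends to 𝔊_𝒜 = 𝔖⁺(E)/I_𝒜.

We model ℂ⟨E²⟩ as the free ℂ-algebra on E × E (whose star operation reverses words and
fixes the generators `u_{ij}`), the quantum symmetric group 𝔖⁺(E) as its quotient by the
two-sided ideal `IE E`, and the ideal I_𝒜 of 𝔖⁺(E) by its preimage `qIdeal E 𝒜` in
ℂ⟨E²⟩, namely the two-sided ideal generated by the relations of `𝔖⁺(E)` together with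
the elements `u_{AB}` with exactly one of A, B in 𝒜.  Self-adjointness of I_𝒜 is
closure of this preimage under star, and the containment
Δ(I_𝒜) ⊆ I_𝒜 ⊗ 𝔖⁺(E) + 𝔖⁺(E) ⊗ I_𝒜 is membership of Δ₀(x), for x ∈ qIdeal E 𝒜, in the
ℂ-submodule of ℂ⟨E²⟩ ⊗ ℂ⟨E²⟩ spanned by the pure tensors with one leg in `qIdeal E 𝒜`
(whose image in 𝔖⁺(E) ⊗ 𝔖⁺(E) is exactly I_𝒜 ⊗ 𝔖⁺(E) + 𝔖⁺(E) ⊗ I_𝒜).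
-/

open scoped TensorProduct

noncomputable section

/-- The generator `u_{ij}` of `ℂ⟨E²⟩`. -/
def u (E : Type) (i j : E) : FreeAlgebra ℂ (E × E) :=
  FreeAlgebra.ι ℂ (i, j)

/-- The defining relations of the quantum symmetric group `𝔖⁺(E)`. -/
def symRels (E : Type) [Fintype E] : Set (FreeAlgebra ℂ (E × E)) :=
  {x | ∃ i j : E, x = u E i j * u E i j - u E i j} ∪
  {x | ∃ i k l : E, k ≠ l ∧ x = u E i k * u E i l} ∪
  {x | ∃ j k l : E, k ≠ l ∧ x = u E k j * u E l j} ∪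
  {x | ∃ j : E, x = (∑ k : E, u E k j) - 1} ∪
  {x | ∃ i : E, x = (∑ k : E, u E i k) - 1}

/-- For tuples `A B : Fin k → E`, the (ordered, noncommutative) product
`u_{AB} = u_{a₁b₁} ⋯ u_{a_k b_k}`. -/
def uProd (E : Type) {k : ℕ} (A B : Fin k → E) : FreeAlgebra ℂ (E × E) :=
  (List.ofFn fun t => u E (A t) (B t)).prod

/-- Tuples of elements of `E` (of arbitrary length). -/
abbrev Tup (E : Type) := Σ k : ℕ, Fin k → E

/-- The elements `u_{AB}` where exactly one of the tuples `A`, `B` lies in `𝒜`. -/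
def tupleGens (E : Type) (𝒜 : Set (Tup E)) : Set (FreeAlgebra ℂ (E × E)) :=
  {x | ∃ (k : ℕ) (A B : Fin k → E),
    Xor' (⟨k, A⟩ ∈ 𝒜) (⟨k, B⟩ ∈ 𝒜) ∧ x = uProd E A B}

/-- The preimage in `ℂ⟨E²⟩` of the ideal `I_𝒜` of `𝔖⁺(E)`. -/
def qIdeal (E : Type) [Fintype E] (𝒜 : Set (Tup E)) :
    TwoSidedIdeal (FreeAlgebra ℂ (E × E)) :=
  TwoSidedIdeal.span (symRels E ∪ tupleGens E 𝒜)

/-- The coproduct `Δ` at the level of `ℂ⟨E²⟩`: the unital algebra homomorphism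
determined by `Δ(u_{ij}) = Σ_{k∈E} u_{ik} ⊗ u_{kj}`. -/
def Delta (E : Type) [Fintype E] :
    FreeAlgebra ℂ (E × E) →ₐ[ℂ] FreeAlgebra ℂ (E × E) ⊗[ℂ] FreeAlgebra ℂ (E × E) :=
  FreeAlgebra.lift ℂ (fun p : E × E => ∑ k : E, u E p.1 k ⊗ₜ[ℂ] u E k p.2)

/-!
Both claims only need checking on the generators of `I_𝒜`, because `{x | star x ∈ I_𝒜}` and
`Δ⁻¹(I_𝒜 ⊗ 𝔖⁺(E) + 𝔖⁺(E) ⊗ I_𝒜)` are again two-sided ideals. A ring map out of `ℂ⟨E²⟩` kills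
the relations of `𝔖⁺(E)` exactly when the images of the `u_{ij}` form a magic matrix, and the
product of two magic matrices with mutually commuting entries is magic; with `Δ(u) = (u ⊗ 1)(1 ⊗ u)`
this handles the relations, while `Δ(u_{AB}) = Σ_C u_{AC} ⊗ u_{CB}` has a leg in `I_𝒜` in every
term. For the involution, `u_{AB}*` is the product `u_{a_k b_k} ⋯ u_{a_1 b_1}`. Modulo `I_𝒜`,
the matrix `W = (u_{AB})` indexed by `E^k` has the transposed matrix of reversed products as a
two-sided inverse, and `W` is block diagonal for the partition of `E^k` by membership in `𝒜`;
hence so is its inverse, which says that `u_{AB}* ∈ I_𝒜` whenever exactly one of `A`, `B` is in `𝒜`.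
-/

open Matrix MulOpposite

lemma Fin.sum_univ_fun_succ {E M : Type*} [Fintype E] [AddCommMonoid M] {k : ℕ}
    (f : (Fin (k + 1) → E) → M) : ∑ C, f C = ∑ c, ∑ C, f (Fin.cons c C) := by
  rw [← (Fin.consEquiv fun _ => E).sum_comp f, Fintype.sum_prod_type]
  rfl

namespace Matrix

variable {ι R : Type*} [Fintype ι] [DecidableEq ι] [Ring R]

lemma commute_diagonal_indicator_iff (s : Set ι) [DecidablePred (· ∈ s)] (M : Matrix ι ι R) :
    Commute M (diagonal fun i => if i ∈ s then 1 else 0) ↔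
      ∀ i j, Xor (i ∈ s) (j ∈ s) → M i j = 0 := by
  rw [Commute, SemiconjBy, ← Matrix.ext_iff]
  simp only [mul_diagonal, diagonal_mul]
  refine forall₂_congr fun i j => ?_
  by_cases hi : i ∈ s <;> by_cases hj : j ∈ s <;> simp [hi, hj, Xor, eq_comm]

lemma apply_eq_zero_of_xor_of_mul_eq_one (s : Set ι) {M N : Matrix ι ι R}
    (hM : ∀ i j, Xor (i ∈ s) (j ∈ s) → M i j = 0) (hMN : M * N = 1) (hNM : N * M = 1) :
    ∀ i j, Xor (i ∈ s) (j ∈ s) → N i j = 0 := by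
  classical
  rw [← commute_diagonal_indicator_iff] at hM ⊢
  exact Commute.units_inv_left (u := ⟨M, N, hMN, hNM⟩) hM

section Magic

variable {E R : Type*} [Fintype E] [Ring R]

structure IsMagic (v : Matrix E E R) : Prop where
  mul_self : ∀ i j, v i j * v i j = v i j
  row_orth : ∀ i {j k}, j ≠ k → v i j * v i k = 0
  col_orth : ∀ j {i k}, i ≠ k → v i j * v k j = 0
  row_sum : ∀ i, ∑ j, v i j = 1
  col_sum : ∀ j, ∑ i, v i j = 1

namespace IsMagic

variable {v : Matrix E E R}

lemma map_op (hv : v.IsMagic) : (v.map op).IsMagic where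
  mul_self i j := by simp [← op_mul, hv.mul_self]
  row_orth i j k h := by simp [← op_mul, hv.row_orth i h.symm]
  col_orth j i k h := by simp [← op_mul, hv.col_orth j h.symm]
  row_sum i := by simp [← Finset.op_sum, hv.row_sum]
  col_sum j := by simp [← Finset.op_sum, hv.col_sum]

variable [DecidableEq E]

lemma transpose_mul_self (hv : v.IsMagic) : vᵀ * v = 1 := by
  ext a b
  simp only [mul_apply, transpose_apply, one_apply]
  split_ifs with hab
  · subst hab
    simp only [hv.mul_self, hv.col_sum]
  · exact Finset.sum_eq_zero fun c _ => hv.row_orth c hab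

lemma mul_transpose_self (hv : v.IsMagic) : v * vᵀ = 1 := by
  ext a b
  simp only [mul_apply, transpose_apply, one_apply]
  split_ifs with hab
  · subst hab
    simp only [hv.mul_self, hv.row_sum]
  · exact Finset.sum_eq_zero fun c _ => hv.col_orth c hab

end IsMagic

lemma mul_self_apply_of_row_orth {v : Matrix E E R}
    (row_orth : ∀ i {j k}, j ≠ k → v i j * v i k = 0) (row_sum : ∀ i, ∑ j, v i j = 1)
    (i j : E) : v i j * v i j = v i j :=
  calc v i j * v i j = ∑ k, v i j * v i k :=
        (Finset.sum_eq_single j (fun k _ hk => row_orth i hk.symm) (by simp)).symm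
    _ = v i j := by rw [← Finset.mul_sum, row_sum, mul_one]

lemma IsMagic.mul {a b : Matrix E E R} (ha : a.IsMagic) (hb : b.IsMagic)
    (hab : ∀ i j k l, Commute (a i j) (b k l)) : (a * b).IsMagic := by
  have expand : ∀ i j k l, (a * b) i j * (a * b) k l =
      ∑ m, ∑ n, a i m * a k n * (b m j * b n l) := fun i j k l => by
    simp only [mul_apply, Finset.sum_mul_sum, (hab _ _ _ _).symm.mul_mul_mul_comm]
  have row_orth : ∀ i {j k}, j ≠ k → (a * b) i j * (a * b) i k = 0 := fun i j k hjk => by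
    refine (expand i j i k).trans (Finset.sum_eq_zero fun m _ => Finset.sum_eq_zero fun n _ => ?_)
    obtain rfl | hmn := eq_or_ne m n
    · rw [hb.row_orth m hjk, mul_zero]
    · rw [ha.row_orth i hmn, zero_mul]
  have row_sum : ∀ i, ∑ j, (a * b) i j = 1 := fun i => by
    simp only [mul_apply]
    rw [Finset.sum_comm]
    simp only [← Finset.mul_sum, hb.row_sum, mul_one, ha.row_sum]
  refine ⟨mul_self_apply_of_row_orth row_orth row_sum, row_orth, fun j i k hik => ?_, row_sum,
    fun j => ?_⟩
  · refine (expand i j k j).trans (Finset.sum_eq_zero fun m _ => Finset.sum_eq_zero fun n _ => ?_)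
    obtain rfl | hmn := eq_or_ne m n
    · rw [ha.col_orth m hik, zero_mul]
    · rw [hb.col_orth j hmn, mul_zero]
  · simp only [mul_apply]
    rw [Finset.sum_comm]
    simp only [← Finset.sum_mul, ha.col_sum, one_mul, hb.col_sum]

end Magic

section KronPow

variable {E R : Type*} [Ring R]

def kronPow (v : Matrix E E R) (k : ℕ) : Matrix (Fin k → E) (Fin k → E) R :=
  of fun A B => (List.ofFn fun t => v (A t) (B t)).prod

def kronPowRev (v : Matrix E E R) (k : ℕ) : Matrix (Fin k → E) (Fin k → E) R :=
  (kronPow (v.map op) k).map unop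

variable (v : Matrix E E R) {k : ℕ}

@[simp] lemma kronPow_zero_apply (A B : Fin 0 → E) : kronPow v 0 A B = 1 := by
  simp [kronPow]

@[simp] lemma kronPowRev_zero_apply (A B : Fin 0 → E) : kronPowRev v 0 A B = 1 := by
  simp [kronPowRev]

@[simp] lemma kronPow_cons (a b : E) (A B : Fin k → E) :
    kronPow v (k + 1) (Fin.cons a A) (Fin.cons b B) = v a b * kronPow v k A B := by
  simp [kronPow, List.ofFn_succ]

@[simp] lemma kronPowRev_cons (a b : E) (A B : Fin k → E) :
    kronPowRev v (k + 1) (Fin.cons a A) (Fin.cons b B) = kronPowRev v k A B * v a b := by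
  simp [kronPowRev]

variable [DecidableEq E]

lemma one_apply_cons (a b : E) (A B : Fin k → E) :
    (1 : Matrix (Fin (k + 1) → E) (Fin (k + 1) → E) R) (Fin.cons a A) (Fin.cons b B) =
      if a = b then (1 : Matrix (Fin k → E) (Fin k → E) R) A B else 0 := by
  simp only [one_apply, Fin.cons_inj]
  split_ifs <;> simp_all

variable [Fintype E] {v}

lemma kronPowRev_transpose_mul_kronPow (hv : vᵀ * v = 1) :
    ∀ k, (kronPowRev v k)ᵀ * kronPow v k = 1
  | 0 => by ext A B; rw [Subsingleton.elim A B]; simp [mul_apply]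
  | k + 1 => by
    ext A B
    induction A using Fin.consCases with | _ a A => ?_
    induction B using Fin.consCases with | _ b B => ?_
    have ih := congrFun₂ (kronPowRev_transpose_mul_kronPow hv k) A B
    have hab := congrFun₂ hv a b
    simp only [mul_apply, transpose_apply] at ih hab ⊢
    rw [Fin.sum_univ_fun_succ, Finset.sum_comm, one_apply_cons]
    simp only [kronPowRev_cons, kronPow_cons]
    calc ∑ C, ∑ c, kronPowRev v k C A * v c a * (v c b * kronPow v k C B)
        = ∑ C, kronPowRev v k C A * (∑ c, v c a * v c b) * kronPow v k C B := by
          simp only [Finset.mul_sum, Finset.sum_mul, mul_assoc]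
      _ = if a = b then (1 : Matrix (Fin k → E) (Fin k → E) R) A B else 0 := by
          rw [hab, one_apply]
          split_ifs <;> simp [ih]

lemma kronPow_mul_kronPowRev_transpose (hv : v * vᵀ = 1) :
    ∀ k, kronPow v k * (kronPowRev v k)ᵀ = 1
  | 0 => by ext A B; rw [Subsingleton.elim A B]; simp [mul_apply]
  | k + 1 => by
    ext A B
    induction A using Fin.consCases with | _ a A => ?_
    induction B using Fin.consCases with | _ b B => ?_
    have ih := congrFun₂ (kronPow_mul_kronPowRev_transpose hv k) A B
    have hab := congrFun₂ hv a b
    simp only [mul_apply, transpose_apply] at ih hab ⊢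
    rw [Fin.sum_univ_fun_succ, one_apply_cons]
    simp only [kronPowRev_cons, kronPow_cons]
    calc ∑ c, ∑ C, v a c * kronPow v k A C * (kronPowRev v k B C * v b c)
        = ∑ c, v a c * (∑ C, kronPow v k A C * kronPowRev v k B C) * v b c := by
          simp only [Finset.mul_sum, Finset.sum_mul, mul_assoc]
      _ = if a = b then (1 : Matrix (Fin k → E) (Fin k → E) R) A B else 0 := by
          rw [ih]
          by_cases hAB : A = B
          · subst hAB
            simp only [one_apply_eq, mul_one, hab, one_apply]
          · simp [one_apply_ne hAB]

end KronPow

end Matrix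

namespace TwoSidedIdeal

variable (R : Type*) {A B : Type*} [CommRing R] [Ring A] [Algebra R A] [Ring B] [Algebra R B]

def tensorSupSpan (I : TwoSidedIdeal A) (K : TwoSidedIdeal B) : Submodule R (A ⊗[R] B) :=
  Submodule.span R {z | ∃ a b, (a ∈ I ∨ b ∈ K) ∧ z = a ⊗ₜ b}

variable {R} {I : TwoSidedIdeal A} {K : TwoSidedIdeal B}

lemma tmul_mem_tensorSupSpan {a : A} {b : B} (h : a ∈ I ∨ b ∈ K) :
    a ⊗ₜ b ∈ tensorSupSpan R I K :=
  Submodule.subset_span ⟨a, b, h, rfl⟩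

lemma mul_mem_tensorSupSpan (x : A ⊗[R] B) {y : A ⊗[R] B} (hy : y ∈ tensorSupSpan R I K) :
    x * y ∈ tensorSupSpan R I K ∧ y * x ∈ tensorSupSpan R I K := by
  induction x using TensorProduct.induction_on with
  | zero => simp
  | add x x' hx hx' =>
    simpa [mul_add, add_mul] using
      ⟨Submodule.add_mem _ hx.1 hx'.1, Submodule.add_mem _ hx.2 hx'.2⟩
  | tmul c d =>
    induction hy using Submodule.span_induction with
    | mem y hy =>
      obtain ⟨a, b, hab, rfl⟩ := hy
      simp only [Algebra.TensorProduct.tmul_mul_tmul]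
      exact ⟨tmul_mem_tensorSupSpan (hab.imp (I.mul_mem_left c a) (K.mul_mem_left d b)),
        tmul_mem_tensorSupSpan (hab.imp (I.mul_mem_right a c) (K.mul_mem_right b d))⟩
    | zero => simp
    | add y y' _ _ hy hy' =>
      simpa [mul_add, add_mul] using
        ⟨Submodule.add_mem _ hy.1 hy'.1, Submodule.add_mem _ hy.2 hy'.2⟩
    | smul r y _ hy =>
      simpa [mul_smul_comm, smul_mul_assoc] using
        ⟨Submodule.smul_mem _ r hy.1, Submodule.smul_mem _ r hy.2⟩

variable (R I K) in
def tensorSup : TwoSidedIdeal (A ⊗[R] B) :=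
  mk' (tensorSupSpan R I K) (Submodule.zero_mem _) (Submodule.add_mem _) (Submodule.neg_mem _)
    (fun {x _} hy => (mul_mem_tensorSupSpan x hy).1)
    (fun {_ y} hx => (mul_mem_tensorSupSpan y hx).2)

lemma mem_tensorSup {z : A ⊗[R] B} : z ∈ tensorSup R I K ↔ z ∈ tensorSupSpan R I K := by
  rw [tensorSup, mem_mk']
  rfl

end TwoSidedIdeal

section Generators

variable (E : Type) {R : Type*} [Ring R]

def uMatrix (f : FreeAlgebra ℂ (E × E) →+* R) : Matrix E E R :=
  of fun i j => f (u E i j)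

lemma map_uProd (f : FreeAlgebra ℂ (E × E) →+* R) {k : ℕ} (A B : Fin k → E) :
    f (uProd E A B) = kronPow (uMatrix E f) k A B := by
  simp [uProd, kronPow, uMatrix, map_list_prod, List.map_ofFn, Function.comp_def]

lemma star_u (i j : E) : star (u E i j) = u E i j := FreeAlgebra.star_ι _

variable [Fintype E]

lemma symRels_subset_ker_iff (f : FreeAlgebra ℂ (E × E) →+* R) :
    symRels E ⊆ TwoSidedIdeal.ker f ↔ (uMatrix E f).IsMagic := by
  simp only [symRels, Set.union_subset_iff, Set.ofPred_subset, SetLike.mem_coe,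
    TwoSidedIdeal.mem_ker, forall_exists_index, and_imp]
  simp only [@forall_comm (FreeAlgebra ℂ (E × E)), forall_eq, map_sub, map_mul, map_sum, map_one,
    sub_eq_zero]
  constructor
  · rintro ⟨⟨⟨⟨mul_self, row_orth⟩, col_orth⟩, col_sum⟩, row_sum⟩
    exact ⟨mul_self, fun i _ _ => row_orth i _ _, fun j _ _ => col_orth j _ _, row_sum, col_sum⟩
  · rintro ⟨mul_self, row_orth, col_orth, row_sum, col_sum⟩
    exact ⟨⟨⟨⟨mul_self, fun i _ _ => row_orth i⟩, fun j _ _ => col_orth j⟩, col_sum⟩, row_sum⟩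

variable {E} (𝒜 : Set (Tup E))

lemma qIdeal_le_ker_iff (f : FreeAlgebra ℂ (E × E) →+* R) :
    qIdeal E 𝒜 ≤ TwoSidedIdeal.ker f ↔ (uMatrix E f).IsMagic ∧
      ∀ k (A B : Fin k → E), Xor (⟨k, A⟩ ∈ 𝒜) (⟨k, B⟩ ∈ 𝒜) →
        kronPow (uMatrix E f) k A B = 0 := by
  rw [qIdeal, TwoSidedIdeal.span_le, Set.union_subset_iff, symRels_subset_ker_iff]
  simp only [tupleGens, Set.ofPred_subset, SetLike.mem_coe, TwoSidedIdeal.mem_ker,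
    forall_exists_index, and_imp]
  simp only [@forall_comm (FreeAlgebra ℂ (E × E)), forall_eq, map_uProd]
  rfl

theorem star_mem_qIdeal {x : FreeAlgebra ℂ (E × E)} (hx : x ∈ qIdeal E 𝒜) :
    star x ∈ qIdeal E 𝒜 := by
  classical
  set π := (qIdeal E 𝒜).ringCon.mk'
  obtain ⟨hv, hW⟩ := (qIdeal_le_ker_iff 𝒜 π).1 (TwoSidedIdeal.ker_ringCon_mk' _).ge
  -- `σ x = op (π (star x))`, so `ker σ = {x | star x ∈ qIdeal E 𝒜}`.
  let σ := (RingHom.op π).comp (starRingEquiv : FreeAlgebra ℂ (E × E) ≃+* _).toRingHom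
  have hσ : uMatrix E σ = (uMatrix E π).map op := by
    ext i j
    simp [uMatrix, σ, star_u]
  suffices qIdeal E 𝒜 ≤ TwoSidedIdeal.ker σ by
    have hσx := (TwoSidedIdeal.mem_ker σ).1 (this hx)
    rw [← TwoSidedIdeal.ker_ringCon_mk' (qIdeal E 𝒜), TwoSidedIdeal.mem_ker π]
    simpa [σ] using hσx
  refine (qIdeal_le_ker_iff 𝒜 σ).2 ⟨hσ ▸ hv.map_op, fun k A B hAB => ?_⟩
  have hrev := apply_eq_zero_of_xor_of_mul_eq_one {C | (⟨k, C⟩ : Tup E) ∈ 𝒜} (hW k)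
    (kronPow_mul_kronPowRev_transpose hv.mul_transpose_self k)
    (kronPowRev_transpose_mul_kronPow hv.transpose_mul_self k) B A (Or.symm hAB)
  rw [hσ]
  simpa [kronPowRev] using hrev

end Generators

section Coproduct

open TwoSidedIdeal Algebra.TensorProduct

variable (E : Type)

lemma uProd_cons {k : ℕ} (a b : E) (A B : Fin k → E) :
    uProd E (Fin.cons a A) (Fin.cons b B) = u E a b * uProd E A B := by
  simp [uProd, List.ofFn_succ]

variable [Fintype E]

lemma Delta_u (i j : E) : Delta E (u E i j) = ∑ c, u E i c ⊗ₜ u E c j :=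
  FreeAlgebra.lift_ι_apply _ _

lemma Delta_uProd {k : ℕ} (A B : Fin k → E) :
    Delta E (uProd E A B) = ∑ C, uProd E A C ⊗ₜ uProd E C B := by
  induction k with
  | zero => simp [uProd, Algebra.TensorProduct.one_def]
  | succ k ih =>
    induction A using Fin.consCases with | _ a A => ?_
    induction B using Fin.consCases with | _ b B => ?_
    simp only [uProd_cons, map_mul, Delta_u, ih, Finset.sum_mul_sum, Fin.sum_univ_fun_succ,
      tmul_mul_tmul]

variable {E} (𝒜 : Set (Tup E))

lemma uProd_mem_qIdeal {k : ℕ} {A B : Fin k → E}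
    (hAB : Xor ((⟨k, A⟩ : Tup E) ∈ 𝒜) (⟨k, B⟩ ∈ 𝒜)) :
    uProd E A B ∈ qIdeal E 𝒜 :=
  subset_span (Or.inr ⟨k, A, B, hAB, rfl⟩)

lemma Delta_uProd_mem_tensorSup {k : ℕ} {A B : Fin k → E}
    (hAB : Xor ((⟨k, A⟩ : Tup E) ∈ 𝒜) (⟨k, B⟩ ∈ 𝒜)) :
    Delta E (uProd E A B) ∈ tensorSup ℂ (qIdeal E 𝒜) (qIdeal E 𝒜) := by
  rw [Delta_uProd]
  refine sum_mem fun C _ => tmul_mem_tensorSupSpan ?_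
  by_cases hAC : Xor ((⟨k, A⟩ : Tup E) ∈ 𝒜) (⟨k, C⟩ ∈ 𝒜)
  · exact Or.inl (uProd_mem_qIdeal 𝒜 hAC)
  · exact Or.inr (uProd_mem_qIdeal 𝒜 (by unfold Xor at *; tauto))

theorem Delta_mem_tensorSup {x : FreeAlgebra ℂ (E × E)} (hx : x ∈ qIdeal E 𝒜) :
    Delta E x ∈ tensorSup ℂ (qIdeal E 𝒜) (qIdeal E 𝒜) := by
  set J := tensorSup ℂ (qIdeal E 𝒜) (qIdeal E 𝒜)
  set mk := J.ringCon.mk'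
  have mk_eq_zero : ∀ z, mk z = 0 ↔ z ∈ J := fun z => by rw [← mem_ker, ker_ringCon_mk']
  let left := mk.comp includeLeftRingHom
  let right := mk.comp (includeRight : FreeAlgebra ℂ (E × E) →ₐ[ℂ] _).toRingHom
  have magic_left : (uMatrix E left).IsMagic := ((qIdeal_le_ker_iff 𝒜 left).1 fun y hy =>
    (mem_ker _).2 ((mk_eq_zero _).2 (tmul_mem_tensorSupSpan (Or.inl hy)))).1
  have magic_right : (uMatrix E right).IsMagic := ((qIdeal_le_ker_iff 𝒜 right).1 fun y hy =>
    (mem_ker _).2 ((mk_eq_zero _).2 (tmul_mem_tensorSupSpan (Or.inr hy)))).1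
  have left_comm_right : ∀ i j k l, Commute (uMatrix E left i j) (uMatrix E right k l) :=
    fun i j k l => by
      simp [Commute, SemiconjBy, uMatrix, left, right, ← map_mul, tmul_mul_tmul]
  let f := mk.comp (Delta E).toRingHom
  have hf : uMatrix E f = uMatrix E left * uMatrix E right := by
    ext i j
    simp [uMatrix, f, left, right, Matrix.mul_apply, Delta_u, ← map_mul, tmul_mul_tmul]
  have hker : qIdeal E 𝒜 ≤ ker f := (qIdeal_le_ker_iff 𝒜 f).2
    ⟨hf ▸ magic_left.mul magic_right left_comm_right, fun k A B hAB => by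
      rw [← map_uProd]
      exact (mk_eq_zero _).2 (Delta_uProd_mem_tensorSup 𝒜 hAB)⟩
  exact (mk_eq_zero _).1 ((mem_ker f).1 (hker hx))

end Coproduct

theorem qIdeal_selfAdjoint_and_Delta_descends_general (E : Type) [Fintype E]
    (𝒜 : Set (Tup E)) :
    (∀ x ∈ qIdeal E 𝒜, star x ∈ qIdeal E 𝒜) ∧
    (∀ x ∈ qIdeal E 𝒜, Delta E x ∈ Submodule.span ℂ
      {z : FreeAlgebra ℂ (E × E) ⊗[ℂ] FreeAlgebra ℂ (E × E) |
        ∃ a b : FreeAlgebra ℂ (E × E),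
          (a ∈ qIdeal E 𝒜 ∨ b ∈ qIdeal E 𝒜) ∧ z = a ⊗ₜ[ℂ] b}) :=
  ⟨fun _ hx => star_mem_qIdeal 𝒜 hx,
    fun _ hx => TwoSidedIdeal.mem_tensorSup.1 (Delta_mem_tensorSup 𝒜 hx)⟩

/-- For every nonempty set `𝒜` of tuples over `E` of length at most
`|E|`, the ideal `I_𝒜` of `𝔖⁺(E)` is self-adjoint, and
`Δ(I_𝒜) ⊆ I_𝒜 ⊗ 𝔖⁺(E) + 𝔖⁺(E) ⊗ I_𝒜`; hence `Δ` descends to a coproduct on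
`𝔊_𝒜 = 𝔖⁺(E)/I_𝒜`, making `𝔊_𝒜` a quantum permutation group on `E`. -/
theorem qIdeal_selfAdjoint_and_Delta_descends (E : Type) [Fintype E] [Nonempty E]
    (𝒜 : Set (Tup E)) (h𝒜 : 𝒜.Nonempty) (hlen : ∀ T ∈ 𝒜, T.1 ≤ Fintype.card E) :
    (∀ x ∈ qIdeal E 𝒜, star x ∈ qIdeal E 𝒜) ∧
    (∀ x ∈ qIdeal E 𝒜, Delta E x ∈ Submodule.span ℂ
      {z : FreeAlgebra ℂ (E × E) ⊗[ℂ] FreeAlgebra ℂ (E × E) |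
        ∃ a b : FreeAlgebra ℂ (E × E),
          (a ∈ qIdeal E 𝒜 ∨ b ∈ qIdeal E 𝒜) ∧ z = a ⊗ₜ[ℂ] b}) :=
  qIdeal_selfAdjoint_and_Delta_descends_general E 𝒜

end
end

section
/- Let 𝒜₁, 𝒜₂ be nonempty sets of tuples over E of length at most |E|. Suppose that for each ℓ and each pair of tuples A = (a₁,…,a_ℓ) ∈ 𝒜₂ and B = (b₁,…,b_ℓ) ∉ 𝒜₂ there exist x ∈ E and a position i ∈ {1,…,ℓ} such that the tuple obtained from A by inserting x at position i lies in 𝒜₁, while for every y ∈ E the tuple obtained from B by inserting y at position i does not lie in 𝒜₁. Then I_{𝒜₂} ⊆ I_{𝒜₁}, i.e. 𝔊_{𝒜₁} ≤ 𝔊_{𝒜₂}. -/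
/-!
STATEMENT 3: If for each ℓ and each pair of same-length tuples A ∈ 𝒜₂, B ∉ 𝒜₂ there
are x ∈ E and a position i such that inserting x into A at position i gives a tuple in
𝒜₁ while inserting any y ∈ E into B at position i gives a tuple not in 𝒜₁, then
I_{𝒜₂} ⊆ I_{𝒜₁}, i.e. 𝔊_{𝒜₁} ≤ 𝔊_{𝒜₂}.

We model the ideal I_𝒜 of 𝔖⁺(E) by its preimage `qIdeal E 𝒜` in ℂ⟨E²⟩ (the two-sided
ideal generated by the relations of 𝔖⁺(E) together with the offending `u_{AB}`), so that
I_{𝒜₂} ⊆ I_{𝒜₁} becomes `qIdeal E 𝒜₂ ≤ qIdeal E 𝒜₁`.  Insertion of `x` at position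
`i ∈ {1, …, ℓ}` of an `ℓ`-tuple is `Fin.insertNth i.castSucc x`.
-/

noncomputable section

/-!
Let `A ∈ 𝒜₂`, `B ∉ 𝒜₂`, and let `x`, `i` be as in the hypothesis. Splitting `u_{AB} = a b` at
position `i`, the row relation `∑_y u_{xy} = 1` gives `u_{AB} = ∑_y a u_{xy} b` modulo `I_{𝒜₁}`, and
each `a u_{xy} b = u_{A^x B^y}` is a generator of `I_{𝒜₁}` because `A^x ∈ 𝒜₁ ∌ B^y`. When instead
`A ∉ 𝒜₂ ∋ B`, the same argument runs with the column relation `∑_y u_{yx} = 1`.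
-/

theorem TwoSidedIdeal.mul_mem_of_sum_sub_one_mem {R ι : Type*} [Ring R] (I : TwoSidedIdeal R)
    (s : Finset ι) (c : ι → R) (hc : (∑ i ∈ s, c i) - 1 ∈ I) {a b : R}
    (h : ∀ i ∈ s, a * c i * b ∈ I) : a * b ∈ I := by
  have hab : a * b = ∑ i ∈ s, a * c i * b - a * ((∑ i ∈ s, c i) - 1) * b := by
    simp only [mul_sub, sub_mul, Finset.mul_sum, Finset.sum_mul, mul_one, sub_sub_cancel]
  rw [hab]
  exact I.sub_mem (I.finsetSum_mem _ _ h) (I.mul_mem_right _ _ (I.mul_mem_left _ _ hc))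

theorem Fin.insertNth_map₂ {α β γ : Type*} {n : ℕ} (p : Fin (n + 1)) (g : α → β → γ)
    (x : α) (y : β) (A : Fin n → α) (B : Fin n → β) :
    (fun t => g (p.insertNth (α := fun _ => α) x A t) (p.insertNth (α := fun _ => β) y B t)) =
      p.insertNth (α := fun _ => γ) (g x y) fun t => g (A t) (B t) := by
  funext t
  cases t using Fin.succAboveCases p <;> simp

theorem List.exists_prod_ofFn_insertNth {M : Type*} [Monoid M] :
    ∀ {n : ℕ} (p : Fin (n + 1)) (f : Fin n → M),
      ∃ a b : M, (List.ofFn f).prod = a * b ∧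
        ∀ c, (List.ofFn (p.insertNth c f)).prod = a * c * b
  | 0, p, f => by
    obtain rfl : p = 0 := Fin.fin_one_eq_zero p
    exact ⟨1, (List.ofFn f).prod, by simp, fun c => by simp [Fin.insertNth_zero']⟩
  | n + 1, p, f => by
    cases p using Fin.cases with
    | zero => exact ⟨1, (List.ofFn f).prod, by simp, fun c => by simp [Fin.insertNth_zero']⟩
    | succ i =>
      obtain ⟨h, t, rfl⟩ := Fin.exists_cons f
      obtain ⟨a, b, hf, hins⟩ := exists_prod_ofFn_insertNth i t
      refine ⟨h * a, b, by rw [List.ofFn_cons, List.prod_cons, hf, mul_assoc], fun c => ?_⟩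
      rw [Fin.insertNth_succ_cons, List.ofFn_cons, List.prod_cons, hins, mul_assoc, mul_assoc,
        mul_assoc]

theorem exists_uProd_insertNth {E : Type} {k : ℕ} (p : Fin (k + 1)) (A B : Fin k → E) :
    ∃ a b, uProd E A B = a * b ∧
      ∀ x y, uProd E (p.insertNth x A) (p.insertNth y B) = a * u E x y * b := by
  obtain ⟨a, b, hAB, hins⟩ := List.exists_prod_ofFn_insertNth p fun t => u E (A t) (B t)
  refine ⟨a, b, hAB, fun x y => ?_⟩
  rw [uProd, Fin.insertNth_map₂ p (u E), hins]

section qIdeal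

variable {E : Type} [Fintype E] {𝒜 : Set (Tup E)}

theorem sum_u_row_sub_one_mem_qIdeal (i : E) : (∑ k, u E i k) - 1 ∈ qIdeal E 𝒜 :=
  TwoSidedIdeal.subset_span (Or.inl (Or.inr ⟨i, rfl⟩))

theorem sum_u_col_sub_one_mem_qIdeal (j : E) : (∑ k, u E k j) - 1 ∈ qIdeal E 𝒜 :=
  TwoSidedIdeal.subset_span (Or.inl (Or.inl (Or.inr ⟨j, rfl⟩)))

theorem uProd_mem_qIdeal_of_xor {k : ℕ} {A B : Fin k → E}
    (h : Xor' ((⟨k, A⟩ : Tup E) ∈ 𝒜) ((⟨k, B⟩ : Tup E) ∈ 𝒜)) : uProd E A B ∈ qIdeal E 𝒜 :=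
  TwoSidedIdeal.subset_span (Or.inr ⟨k, A, B, h, rfl⟩)

theorem uProd_mem_qIdeal_of_insertNth_right {k : ℕ} (p : Fin (k + 1)) (x : E)
    {A B : Fin k → E} (h : ∀ y, uProd E (p.insertNth x A) (p.insertNth y B) ∈ qIdeal E 𝒜) :
    uProd E A B ∈ qIdeal E 𝒜 := by
  obtain ⟨a, b, hAB, hins⟩ := exists_uProd_insertNth p A B
  rw [hAB]
  exact (qIdeal E 𝒜).mul_mem_of_sum_sub_one_mem _ _ (sum_u_row_sub_one_mem_qIdeal x)
    fun y _ => hins x y ▸ h y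

theorem uProd_mem_qIdeal_of_insertNth_left {k : ℕ} (p : Fin (k + 1)) (x : E)
    {A B : Fin k → E} (h : ∀ y, uProd E (p.insertNth y A) (p.insertNth x B) ∈ qIdeal E 𝒜) :
    uProd E A B ∈ qIdeal E 𝒜 := by
  obtain ⟨a, b, hAB, hins⟩ := exists_uProd_insertNth p A B
  rw [hAB]
  exact (qIdeal E 𝒜).mul_mem_of_sum_sub_one_mem _ _ (sum_u_col_sub_one_mem_qIdeal x)
    fun y _ => hins y x ▸ h y

end qIdeal

theorem qIdeal_le_of_insert_general (E : Type) [Fintype E]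
    (𝒜₁ 𝒜₂ : Set (Tup E))
    (hins : ∀ (ℓ : ℕ) (A B : Fin ℓ → E),
      (⟨ℓ, A⟩ : Tup E) ∈ 𝒜₂ → (⟨ℓ, B⟩ : Tup E) ∉ 𝒜₂ →
      ∃ (x : E) (i : Fin ℓ),
        (⟨ℓ + 1, Fin.insertNth i.castSucc x A⟩ : Tup E) ∈ 𝒜₁ ∧
        ∀ y : E, (⟨ℓ + 1, Fin.insertNth i.castSucc y B⟩ : Tup E) ∉ 𝒜₁) :
    qIdeal E 𝒜₂ ≤ qIdeal E 𝒜₁ := by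
  refine TwoSidedIdeal.span_le.mpr ?_
  rintro z (hrel | ⟨k, A, B, hAB | hBA, rfl⟩)
  · exact TwoSidedIdeal.subset_span (Or.inl hrel)
  · obtain ⟨x, i, hA, hB⟩ := hins k A B hAB.1 hAB.2
    exact uProd_mem_qIdeal_of_insertNth_right i.castSucc x fun y =>
      uProd_mem_qIdeal_of_xor (Or.inl ⟨hA, hB y⟩)
  · obtain ⟨x, i, hB, hA⟩ := hins k B A hBA.1 hBA.2
    exact uProd_mem_qIdeal_of_insertNth_left i.castSucc x fun y =>
      uProd_mem_qIdeal_of_xor (Or.inr ⟨hB, hA y⟩)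

/-- Under the insertion hypothesis, `I_{𝒜₂} ⊆ I_{𝒜₁}`,
i.e. `𝔊_{𝒜₁} ≤ 𝔊_{𝒜₂}`. -/
theorem qIdeal_le_of_insert (E : Type) [Fintype E] [Nonempty E]
    (𝒜₁ 𝒜₂ : Set (Tup E)) (h₁ : 𝒜₁.Nonempty) (h₂ : 𝒜₂.Nonempty)
    (hlen₁ : ∀ T ∈ 𝒜₁, T.1 ≤ Fintype.card E)
    (hlen₂ : ∀ T ∈ 𝒜₂, T.1 ≤ Fintype.card E)
    (hins : ∀ (ℓ : ℕ) (A B : Fin ℓ → E),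
      (⟨ℓ, A⟩ : Tup E) ∈ 𝒜₂ → (⟨ℓ, B⟩ : Tup E) ∉ 𝒜₂ →
      ∃ (x : E) (i : Fin ℓ),
        (⟨ℓ + 1, Fin.insertNth i.castSucc x A⟩ : Tup E) ∈ 𝒜₁ ∧
        ∀ y : E, (⟨ℓ + 1, Fin.insertNth i.castSucc y B⟩ : Tup E) ∉ 𝒜₁) :
    qIdeal E 𝒜₂ ≤ qIdeal E 𝒜₁ :=
  qIdeal_le_of_insert_general E 𝒜₁ 𝒜₂ hins

end
end

section
/- For every matroid M on a nonempty finite ground set E, the flats quantum automorphism group QAut_ℱ(M) is commutative: u_{ab}u_{cd} = u_{cd}u_{ab} holds in QAut_ℱ(M) for all a,b,c,d ∈ E. (Hence QAut_ℱ(M) is isomorphic to the algebra C(Aut(M)) of ℂ-valued functions on the automorphism group of M.) -/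
/-!
We model a matroid on E as a Mathlib `Matroid E` with ground set all of `E`, and the
defining ideal of QAut_ℱ(M) (an ideal of 𝔖⁺(E)) by its preimage `qIdeal E 𝒜` in ℂ⟨E²⟩,
where 𝒜 is the set of flat tuples: repetition-free tuples whose underlying set is a
flat of M.  An equation `x = y` in QAut_ℱ(M) is the membership `x - y ∈ qIdeal E 𝒜`.
-/

noncomputable section

/-- Flat tuples of a matroid: repetition-free tuples whose underlying set is a flat. -/
def flatTuples {E : Type} (M : Matroid E) : Set (Tup E) :=
  {T | Function.Injective T.2 ∧ M.IsFlat (Set.range T.2)}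

/-!
Write `π` for the quotient map `ℂ⟨E²⟩ → 𝔊_𝒜`. If `B` is a repetition-free tuple missing some
`y ∈ E`, the column relation `∑ₓ u_{xy} = 1` gives `π u_{AB} = ∑ₓ π u_{(A,x)(B,y)}`, so by
induction on `|E| - k` every `π u_{AB}` with `B` repetition-free and `A` not vanishes: at full
length `B` is an enumeration of `E`, hence in `𝒜`, while `A` is not. In particular
`π (u_{cp} u_{ab} u_{cr}) = 0` for `a ≠ c`, `p ≠ r`, and inserting `∑ₚ u_{cp} = 1` on either
side gives `π (u_{ab} u_{cd}) = π (u_{cd} u_{ab} u_{cd}) = π (u_{cd} u_{ab})`.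
-/

section

variable {E : Type}

theorem uProd_snoc {k : ℕ} (A B : Fin k → E) (x y : E) :
    uProd E (Fin.snoc A x) (Fin.snoc B y) = uProd E A B * u E x y := by
  rw [uProd, List.ofFn_succ', List.concat_eq_append, List.prod_append]
  simp [uProd]

structure InjectiveWithEnumerations (𝒜 : Set (Tup E)) : Prop where
  mem_of_bijective : ∀ T : Tup E, T.2.Bijective → T ∈ 𝒜
  injective_of_mem : ∀ T ∈ 𝒜, T.2.Injective

theorem injectiveWithEnumerations_flatTuples {M : Matroid E} (hM : M.E = Set.univ) :
    InjectiveWithEnumerations (flatTuples M) where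
  mem_of_bijective T hT := ⟨hT.injective, by rw [hT.surjective.range_eq, ← hM]; exact M.ground_isFlat⟩
  injective_of_mem _ hT := hT.1

end

section

variable {E : Type} [Fintype E] (𝒜 : Set (Tup E))

/-- The quotient map `ℂ⟨E²⟩ → 𝔊_𝒜`. -/
def qMk : FreeAlgebra ℂ (E × E) →+* (qIdeal E 𝒜).ringCon.Quotient :=
  (qIdeal E 𝒜).ringCon.mk'

theorem qMk_eq_qMk_iff {x y : FreeAlgebra ℂ (E × E)} :
    qMk 𝒜 x = qMk 𝒜 y ↔ x - y ∈ qIdeal E 𝒜 :=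
  (RingCon.eq _).trans (TwoSidedIdeal.rel_iff _ _ _)

theorem qMk_eq_zero_of_mem {x : FreeAlgebra ℂ (E × E)} (hx : x ∈ symRels E ∪ tupleGens E 𝒜) :
    qMk 𝒜 x = 0 := by
  rw [← map_zero (qMk 𝒜), qMk_eq_qMk_iff, sub_zero]
  exact TwoSidedIdeal.subset_span hx

theorem qMk_u_mul_u_of_ne_col (i : E) {k l : E} (h : k ≠ l) :
    qMk 𝒜 (u E i k) * qMk 𝒜 (u E i l) = 0 := by
  rw [← map_mul]
  exact qMk_eq_zero_of_mem 𝒜 (Or.inl (Or.inl (Or.inl (Or.inl (Or.inr ⟨i, k, l, h, rfl⟩)))))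

theorem qMk_u_mul_u_of_ne_row (j : E) {k l : E} (h : k ≠ l) :
    qMk 𝒜 (u E k j) * qMk 𝒜 (u E l j) = 0 := by
  rw [← map_mul]
  exact qMk_eq_zero_of_mem 𝒜 (Or.inl (Or.inl (Or.inl (Or.inr ⟨j, k, l, h, rfl⟩))))

theorem sum_qMk_u_col (j : E) : ∑ k, qMk 𝒜 (u E k j) = 1 := by
  rw [← map_sum, ← sub_eq_zero, ← map_one (qMk 𝒜), ← map_sub]
  exact qMk_eq_zero_of_mem 𝒜 (Or.inl (Or.inl (Or.inr ⟨j, rfl⟩)))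

theorem sum_qMk_u_row (i : E) : ∑ k, qMk 𝒜 (u E i k) = 1 := by
  rw [← map_sum, ← sub_eq_zero, ← map_one (qMk 𝒜), ← map_sub]
  exact qMk_eq_zero_of_mem 𝒜 (Or.inl (Or.inr ⟨i, rfl⟩))

variable {𝒜}

theorem qMk_uProd_eq_zero (h𝒜 : InjectiveWithEnumerations 𝒜) {k : ℕ} (A B : Fin k → E)
    (hB : B.Injective) (hA : ¬ A.Injective) : qMk 𝒜 (uProd E A B) = 0 := by
  by_cases hsurj : B.Surjective
  · refine qMk_eq_zero_of_mem 𝒜 (Or.inr ⟨k, A, B, Or.inr ⟨?_, ?_⟩, rfl⟩)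
    · exact h𝒜.mem_of_bijective ⟨k, B⟩ ⟨hB, hsurj⟩
    · exact fun hA𝒜 => hA (h𝒜.injective_of_mem _ hA𝒜)
  obtain ⟨y, hy⟩ := not_forall.mp hsurj
  -- `hk` is what makes the recursion on `|E| - k` terminate.
  have hk : k < Fintype.card E := by
    simpa using Fintype.card_lt_of_injective_not_surjective B hB hsurj
  calc qMk 𝒜 (uProd E A B)
      = ∑ x, qMk 𝒜 (uProd E (Fin.snoc A x) (Fin.snoc B y)) := by
        simp only [uProd_snoc, map_mul, ← Finset.mul_sum, sum_qMk_u_col, mul_one]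
    _ = 0 := Finset.sum_eq_zero fun x _ =>
        qMk_uProd_eq_zero h𝒜 _ _ (Fin.snoc_injective_of_injective hB (by simpa using hy))
          fun h => hA (Fin.snoc_injective_iff.mp h).1
termination_by Fintype.card E - k

theorem qMk_u_mul_u_mul_u_eq_zero (h𝒜 : InjectiveWithEnumerations 𝒜) (x z : E) {p q r : E}
    (hpq : p ≠ q) (hpr : p ≠ r) (hqr : q ≠ r) :
    qMk 𝒜 (u E x p) * qMk 𝒜 (u E z q) * qMk 𝒜 (u E x r) = 0 := by
  have hB : Function.Injective ![p, q, r] := by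
    intro i j hij
    fin_cases i <;> fin_cases j <;> simp_all
  have hA : ¬ Function.Injective ![x, z, x] := fun h => by
    simpa using @h 0 2 rfl
  simpa [uProd, List.ofFn_succ, mul_assoc] using qMk_uProd_eq_zero h𝒜 _ _ hB hA

theorem qMk_u_mul_u_mul_u_of_ne (h𝒜 : InjectiveWithEnumerations 𝒜) {a c : E} (hac : a ≠ c)
    (b : E) {p r : E} (hpr : p ≠ r) :
    qMk 𝒜 (u E c p) * qMk 𝒜 (u E a b) * qMk 𝒜 (u E c r) = 0 := by
  obtain rfl | hpb := eq_or_ne p b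
  · rw [qMk_u_mul_u_of_ne_row 𝒜 p hac.symm, zero_mul]
  obtain rfl | hbr := eq_or_ne b r
  · rw [mul_assoc, qMk_u_mul_u_of_ne_row 𝒜 b hac, mul_zero]
  exact qMk_u_mul_u_mul_u_eq_zero h𝒜 c a hpb hpr hbr

theorem commute_qMk_u (h𝒜 : InjectiveWithEnumerations 𝒜) (a b c d : E) :
    Commute (qMk 𝒜 (u E a b)) (qMk 𝒜 (u E c d)) := by
  obtain rfl | hac := eq_or_ne a c
  · obtain rfl | hbd := eq_or_ne b d
    · exact Commute.refl _
    · rw [Commute, SemiconjBy, qMk_u_mul_u_of_ne_col 𝒜 a hbd, qMk_u_mul_u_of_ne_col 𝒜 a hbd.symm]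
  set x := qMk 𝒜 (u E a b)
  set y := qMk 𝒜 (u E c d)
  calc x * y
      = (∑ p, qMk 𝒜 (u E c p)) * x * y := by rw [sum_qMk_u_row, one_mul]
    _ = y * x * y := by
        rw [Finset.sum_mul, Finset.sum_mul, Finset.sum_eq_single d
          (fun p _ hpd => qMk_u_mul_u_mul_u_of_ne h𝒜 hac b hpd) (by simp)]
    _ = y * x * ∑ r, qMk 𝒜 (u E c r) := by
        rw [Finset.mul_sum, Finset.sum_eq_single d
          (fun r _ hrd => qMk_u_mul_u_mul_u_of_ne h𝒜 hac b hrd.symm) (by simp)]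
    _ = y * x := by rw [sum_qMk_u_row, mul_one]

end

theorem qIdeal_flat_commutative_general (E : Type) [Fintype E]
    (M : Matroid E) (hM : M.E = Set.univ) :
    ∀ a b c d : E,
      u E a b * u E c d - u E c d * u E a b ∈ qIdeal E (flatTuples M) := fun a b c d =>
  (qMk_eq_qMk_iff _).mp (commute_qMk_u (injectiveWithEnumerations_flatTuples hM) a b c d).eq

/-- For every matroid `M` on a nonempty finite ground set `E`, the
flats quantum automorphism group `QAut_ℱ(M)` is commutative:
`u_{ab}u_{cd} = u_{cd}u_{ab}` in `QAut_ℱ(M)` for all `a, b, c, d ∈ E`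
(hence `QAut_ℱ(M) ≅ C(Aut(M))`). -/
theorem qIdeal_flat_commutative (E : Type) [Fintype E] [Nonempty E]
    (M : Matroid E) (hM : M.E = Set.univ) :
    ∀ a b c d : E,
      u E a b * u E c d - u E c d * u E a b ∈ qIdeal E (flatTuples M) :=
  qIdeal_flat_commutative_general E M hM

end
end

section
/- Let M be a matroid on a nonempty finite ground set E. For a permutation σ of E, let φ_σ : ℂ⟨E²⟩ → ℂ be the unital algebra homomorphism with φ_σ(u_{ij}) = 1 if σ(i) = j and φ_σ(u_{ij}) = 0 otherwise. Then φ_σ vanishes on the two-sided ideal of ℂ⟨E²⟩ generated by I_E together with all elements u_{AB} where exactly one of the tuples A, B is an independent tuple of M, if and only if σ is an automorphism of M. -/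
/-!
STATEMENT 8: For a permutation σ of E, let φ_σ : ℂ⟨E²⟩ → ℂ be the unital algebra
homomorphism with φ_σ(u_{ij}) = 1 if σ(i) = j and 0 otherwise.  Then φ_σ vanishes on
the two-sided ideal generated by I_E together with all u_{AB} with exactly one of A, B
an independent tuple of M, if and only if σ is an automorphism of M.

We model a matroid on E as a Mathlib `Matroid E` with ground set all of `E`.  The ideal
in question is `qIdeal E (indepTuples M)`.  An automorphism of M is a permutation σ such
that for every set B, B is a basis iff σ(B) is a basis (this says exactly that σ maps
bases to bases and so does its inverse).
-/

noncomputable section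

/-- Independent tuples of a matroid: repetition-free tuples whose underlying set
is independent. -/
def indepTuples {E : Type} (M : Matroid E) : Set (Tup E) :=
  {T | Function.Injective T.2 ∧ M.Indep (Set.range T.2)}

/-- The evaluation homomorphism `φ_σ : ℂ⟨E²⟩ → ℂ`, `u_{ij} ↦ [σ(i) = j]`. -/
def phiPerm (E : Type) [DecidableEq E] (σ : Equiv.Perm E) :
    FreeAlgebra ℂ (E × E) →ₐ[ℂ] ℂ :=
  FreeAlgebra.lift ℂ (fun p : E × E => if σ p.1 = p.2 then (1 : ℂ) else 0)

/-!
The character `φ_σ` is evaluation at the permutation matrix of `σ`, which satisfies the relations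
of `I_E`, and `φ_σ(u_{AB})` is `1` if `B = σ ∘ A` and `0` otherwise. So `φ_σ` kills the ideal
exactly when, for every tuple `A`, the tuples `A` and `σ ∘ A` are both independent or both not,
i.e. when `σ` preserves independent sets in both directions; for a matroid this is the same as
preserving bases in both directions, bases being the maximal independent sets.
-/

theorem TwoSidedIdeal.forall_mem_span_apply_eq_zero_iff {R S F : Type*} [Ring R] [Ring S]
    [FunLike F R S] [RingHomClass F R S] (f : F) (s : Set R) :
    (∀ x ∈ span s, f x = 0) ↔ ∀ x ∈ s, f x = 0 :=
  ⟨fun h x hx ↦ h x (subset_span hx),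
    fun h _ hx ↦ (mem_ker f).1 (span_le.2 (fun y hy ↦ (mem_ker f).2 (h y hy)) hx)⟩

section phiPerm

variable {E : Type} [DecidableEq E] (σ : Equiv.Perm E)

theorem phiPerm_u (i j : E) : phiPerm E σ (u E i j) = if σ i = j then 1 else 0 :=
  FreeAlgebra.lift_ι_apply _ _

theorem phiPerm_uProd {k : ℕ} (A B : Fin k → E) :
    phiPerm E σ (uProd E A B) = if ∀ t, σ (A t) = B t then 1 else 0 := by
  simp only [uProd, map_list_prod, List.map_ofFn, List.prod_ofFn, Function.comp_def, phiPerm_u,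
    Finset.prod_boole, Finset.mem_univ, true_imp_iff]

theorem phiPerm_eq_zero_of_mem_symRels [Fintype E] {x : FreeAlgebra ℂ (E × E)}
    (hx : x ∈ symRels E) : phiPerm E σ x = 0 := by
  rcases hx with (((⟨i, j, rfl⟩ | ⟨i, k, l, hkl, rfl⟩) | ⟨j, k, l, hkl, rfl⟩) | ⟨j, rfl⟩) |
    ⟨i, rfl⟩
  · rw [map_sub, map_mul, phiPerm_u]
    split_ifs <;> norm_num
  · rw [map_mul, phiPerm_u, phiPerm_u]
    split_ifs with hk hl
    · exact absurd (hk.symm.trans hl) hkl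
    all_goals norm_num
  · rw [map_mul, phiPerm_u, phiPerm_u]
    split_ifs with hk hl
    · exact absurd (σ.injective (hk.trans hl.symm)) hkl
    all_goals norm_num
  · simp [phiPerm_u, ← Equiv.eq_symm_apply]
  · simp [phiPerm_u]

theorem phiPerm_vanishes_on_tupleGens_iff (𝒜 : Set (Tup E)) :
    (∀ x ∈ tupleGens E 𝒜, phiPerm E σ x = 0) ↔
      ∀ (k : ℕ) (A : Fin k → E), (⟨k, A⟩ ∈ 𝒜 ↔ ⟨k, σ ∘ A⟩ ∈ 𝒜) := by
  constructor
  · intro h k A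
    by_contra hA
    have := h _ ⟨k, A, σ ∘ A, (xor_iff_not_iff _ _).2 hA, rfl⟩
    simp [phiPerm_uProd] at this
  · rintro h _ ⟨k, A, B, hAB, rfl⟩
    rw [phiPerm_uProd, if_neg]
    intro hB
    obtain rfl : B = σ ∘ A := funext fun t ↦ (hB t).symm
    exact (xor_iff_not_iff _ _).1 hAB (h k A)

theorem phiPerm_vanishes_on_qIdeal_iff [Fintype E] (𝒜 : Set (Tup E)) :
    (∀ x ∈ qIdeal E 𝒜, phiPerm E σ x = 0) ↔
      ∀ (k : ℕ) (A : Fin k → E), (⟨k, A⟩ ∈ 𝒜 ↔ ⟨k, σ ∘ A⟩ ∈ 𝒜) := by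
  simp only [qIdeal, TwoSidedIdeal.forall_mem_span_apply_eq_zero_iff, Set.mem_union, or_imp,
    forall_and]
  rw [phiPerm_vanishes_on_tupleGens_iff]
  exact and_iff_right fun _ hx ↦ phiPerm_eq_zero_of_mem_symRels σ hx

end phiPerm

section Matroid

variable {α : Type*} (σ : Equiv.Perm α)

theorem Maximal.image_perm {P : Set α → Prop} (hP : ∀ X, P X ↔ P (σ '' X)) {X : Set α}
    (hX : Maximal P X) : Maximal P (σ '' X) := by
  refine ⟨(hP X).1 hX.prop, fun Y hY hXY ↦ ?_⟩
  rw [← σ.image_symm_image Y, σ.image_subset] at hXY ⊢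
  exact hX.le_of_ge (by rwa [hP, σ.image_symm_image]) hXY

variable (M : Matroid α)

theorem Matroid.indep_image_iff_of_isBase_image_iff
    (h : ∀ B, M.IsBase B ↔ M.IsBase (σ '' B)) (I : Set α) : M.Indep I ↔ M.Indep (σ '' I) := by
  simp only [Matroid.indep_iff]
  constructor
  · rintro ⟨B, hB, hIB⟩
    exact ⟨σ '' B, (h B).1 hB, Set.image_mono hIB⟩
  · rintro ⟨B, hB, hIB⟩
    exact ⟨σ.symm '' B, by rwa [h, σ.image_symm_image], (σ.subset_symm_image _ _).2 hIB⟩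

theorem Matroid.isBase_image_of_indep_image_iff
    (h : ∀ I, M.Indep I ↔ M.Indep (σ '' I)) {B : Set α} (hB : M.IsBase B) :
    M.IsBase (σ '' B) := by
  rw [Matroid.isBase_iff_maximal_indep] at hB ⊢
  exact hB.image_perm σ h

theorem Matroid.isBase_image_iff_iff_indep_image_iff :
    (∀ B, M.IsBase B ↔ M.IsBase (σ '' B)) ↔ ∀ I, M.Indep I ↔ M.Indep (σ '' I) := by
  refine ⟨M.indep_image_iff_of_isBase_image_iff σ, fun h B ↦
    ⟨M.isBase_image_of_indep_image_iff σ h, fun hB ↦ ?_⟩⟩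
  have h_symm (I : Set α) : M.Indep I ↔ M.Indep (σ.symm '' I) := by
    rw [h (σ.symm '' I), σ.image_symm_image]
  simpa using M.isBase_image_of_indep_image_iff σ.symm h_symm hB

end Matroid

theorem Matroid.forall_mem_indepTuples_comp_iff {E : Type} [Finite E] (M : Matroid E)
    (σ : Equiv.Perm E) :
    (∀ (k : ℕ) (A : Fin k → E), ((⟨k, A⟩ : Tup E) ∈ indepTuples M ↔ ⟨k, σ ∘ A⟩ ∈ indepTuples M)) ↔
      ∀ I, M.Indep I ↔ M.Indep (σ '' I) := by
  simp only [indepTuples, Set.mem_ofPred_eq, EquivLike.comp_injective, Set.range_comp]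
  constructor
  · intro h I
    obtain ⟨k, A, hA, rfl⟩ := I.toFinite.fin_param
    simpa [hA] using h k A
  · intro h k A
    rw [h]

theorem phiPerm_vanishes_iff_aut_general (E : Type) [Fintype E] [DecidableEq E]
    (M : Matroid E) (σ : Equiv.Perm E) :
    (∀ x ∈ qIdeal E (indepTuples M), phiPerm E σ x = 0) ↔
    (∀ B : Set E, M.IsBase B ↔ M.IsBase (σ '' B)) := by
  rw [phiPerm_vanishes_on_qIdeal_iff, Matroid.forall_mem_indepTuples_comp_iff,
    Matroid.isBase_image_iff_iff_indep_image_iff]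

/-- `φ_σ` vanishes on the two-sided ideal generated by `I_E` and the
elements `u_{AB}` with exactly one of `A`, `B` an independent tuple of `M`, if and only
if `σ` is an automorphism of the matroid `M`. -/
theorem phiPerm_vanishes_iff_aut (E : Type) [Fintype E] [Nonempty E] [DecidableEq E]
    (M : Matroid E) (hM : M.E = Set.univ) (σ : Equiv.Perm E) :
    (∀ x ∈ qIdeal E (indepTuples M), phiPerm E σ x = 0) ↔
    (∀ B : Set E, M.IsBase B ↔ M.IsBase (σ '' B)) :=
  phiPerm_vanishes_iff_aut_general E M σ

end
end

section
/- Let M be a matroid on a nonempty finite ground set E and let L ⊆ E be the set of loops of M. Then the defining ideal I(QAut_ℐ(M)) of the independent-sets quantum automorphism group equals the two-sided ideal of 𝔖⁺(E) generated by the elements u_{ij} with exactly one of i, j lying in L, together with the elements u_{AB} where A, B are tuples over E∖L of the same length such that exactly one of A, B is an independent tuple of the deletion M∖L. In other words, QAut_ℐ(M) is the free product 𝔖⁺(L) * QAut_ℐ(M∖L). -/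
/-!
STATEMENT 9: Let M be a matroid on a nonempty finite ground set E with loop set L.
Then I(QAut_ℐ(M)) equals the two-sided ideal of 𝔖⁺(E) generated by the u_{ij} with
exactly one of i, j in L together with the u_{AB} for same-length tuples A, B over E∖L
with exactly one of A, B an independent tuple of the deletion M∖L.  In other words,
QAut_ℐ(M) = 𝔖⁺(L) * QAut_ℐ(M∖L).

We model a matroid on E as a Mathlib `Matroid E` with ground set all of `E`; ideals of
𝔖⁺(E) are modelled by their preimages in ℂ⟨E²⟩, which always contain the defining
relations `symRels E` of 𝔖⁺(E).  The deletion M∖L is `M ↾ Lᶜ` (its independent sets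
are exactly the independent sets of M contained in E∖L).
-/

noncomputable section

/-- The set of loops of a matroid. -/
def loopSet {E : Type} (M : Matroid E) : Set E := {x | ¬ M.Indep {x}}

/-- The generators of the defining ideal of the free product
`𝔖⁺(L) * QAut_ℐ(M∖L)` inside `𝔖⁺(E)`: the `u_{ij}` with exactly one of `i, j` a loop,
together with the `u_{AB}` for same-length tuples `A`, `B` over `E∖L` such that exactly
one of `A`, `B` is an independent tuple of the deletion `M∖L`. -/
def freeProdGens (E : Type) [Fintype E] (M : Matroid E) : Set (FreeAlgebra ℂ (E × E)) :=
  {x | ∃ i j : E, Xor' (i ∈ loopSet M) (j ∈ loopSet M) ∧ x = u E i j} ∪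
  {x | ∃ (k : ℕ) (A B : Fin k → E),
    (∀ t, A t ∉ loopSet M) ∧ (∀ t, B t ∉ loopSet M) ∧
    Xor' ((⟨k, A⟩ : Tup E) ∈ indepTuples (M.restrict (loopSet M)ᶜ))
         ((⟨k, B⟩ : Tup E) ∈ indepTuples (M.restrict (loopSet M)ᶜ)) ∧
    x = uProd E A B}

/-!
An independent tuple has no loop entries. So if exactly one of `A`, `B` is independent, either
some position pairs a loop with a non-loop, and then `u_{AB}` is a multiple of a generator
`u_{ij}` with exactly one of `i, j` a loop, or both tuples avoid the loops, and on such tuples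
independence in `M` and in `M∖L` agree. Conversely `u_{ij} = u_{(i)(j)}`, and the one-entry
tuple `(i)` is independent exactly when `i` is not a loop.
-/

section Matroid

variable {E : Type} {M : Matroid E} {k : ℕ} {A B : Fin k → E}

lemma notMem_loopSet_of_mem_indepTuples (hA : (⟨k, A⟩ : Tup E) ∈ indepTuples M) (t : Fin k) :
    A t ∉ loopSet M :=
  fun hloop => hloop (hA.2.subset (Set.singleton_subset_iff.2 (Set.mem_range_self t)))

lemma mem_indepTuples_restrict_compl_loopSet_iff (hA : ∀ t, A t ∉ loopSet M) :
    (⟨k, A⟩ : Tup E) ∈ indepTuples (M.restrict (loopSet M)ᶜ) ↔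
      (⟨k, A⟩ : Tup E) ∈ indepTuples M := by
  have hsub : Set.range A ⊆ (loopSet M)ᶜ := Set.range_subset_iff.2 hA
  simp only [indepTuples, Set.mem_ofPred_eq, Matroid.restrict_indep_iff, hsub, and_true]

lemma const_mem_indepTuples_iff (i : E) :
    (⟨1, fun _ : Fin 1 => i⟩ : Tup E) ∈ indepTuples M ↔ i ∉ loopSet M := by
  simp only [indepTuples, loopSet, Set.mem_ofPred_eq, Set.range_const, not_not,
    and_iff_right_iff_imp]
  exact fun _ a b _ => Subsingleton.elim a b

lemma exists_xor_loop_or_forall_not_loop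
    (hxor : Xor ((⟨k, A⟩ : Tup E) ∈ indepTuples M) ((⟨k, B⟩ : Tup E) ∈ indepTuples M)) :
    (∃ t, Xor (A t ∈ loopSet M) (B t ∈ loopSet M)) ∨
      ((∀ t, A t ∉ loopSet M) ∧ ∀ t, B t ∉ loopSet M) := by
  rcases hxor with ⟨hA, -⟩ | ⟨hB, -⟩
  · have hA' := notMem_loopSet_of_mem_indepTuples hA
    by_cases hB' : ∀ t, B t ∉ loopSet M
    · exact Or.inr ⟨hA', hB'⟩
    · push Not at hB'
      obtain ⟨t, ht⟩ := hB'
      exact Or.inl ⟨t, Or.inr ⟨ht, hA' t⟩⟩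
  · have hB' := notMem_loopSet_of_mem_indepTuples hB
    by_cases hA' : ∀ t, A t ∉ loopSet M
    · exact Or.inr ⟨hA', hB'⟩
    · push Not at hA'
      obtain ⟨t, ht⟩ := hA'
      exact Or.inl ⟨t, Or.inl ⟨ht, hB' t⟩⟩

end Matroid

section Ideal

variable {E : Type}

lemma uProd_mem_of_u_mem {k : ℕ} {A B : Fin k → E} {I : TwoSidedIdeal (FreeAlgebra ℂ (E × E))}
    (t : Fin k) (h : u E (A t) (B t) ∈ I) : uProd E A B ∈ I := by
  rw [uProd, List.ofFn_eq_map]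
  exact I.listProd_mem _ _ ⟨t, List.mem_finRange t, h⟩

lemma u_eq_uProd_const (i j : E) :
    u E i j = uProd E (fun _ : Fin 1 => i) (fun _ : Fin 1 => j) := by
  simp [uProd]

variable [Fintype E] (M : Matroid E)

lemma tupleGens_indepTuples_subset_span_freeProdGens :
    tupleGens E (indepTuples M) ⊆ TwoSidedIdeal.span (symRels E ∪ freeProdGens E M) := by
  rintro _ ⟨k, A, B, hxor, rfl⟩
  rcases exists_xor_loop_or_forall_not_loop hxor with ⟨t, ht⟩ | ⟨hA, hB⟩
  · exact uProd_mem_of_u_mem t (TwoSidedIdeal.subset_span (Or.inr (Or.inl ⟨_, _, ht, rfl⟩)))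
  · refine TwoSidedIdeal.subset_span (Or.inr (Or.inr ⟨k, A, B, hA, hB, ?_, rfl⟩))
    rwa [mem_indepTuples_restrict_compl_loopSet_iff hA,
      mem_indepTuples_restrict_compl_loopSet_iff hB]

lemma freeProdGens_subset_qIdeal : freeProdGens E M ⊆ qIdeal E (indepTuples M) := by
  rintro _ (⟨i, j, hxor, rfl⟩ | ⟨k, A, B, hA, hB, hxor, rfl⟩)
  · refine TwoSidedIdeal.subset_span (Or.inr ⟨1, _, _, ?_, u_eq_uProd_const i j⟩)
    rw [const_mem_indepTuples_iff, const_mem_indepTuples_iff]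
    exact xor_not_not.2 hxor
  · refine TwoSidedIdeal.subset_span (Or.inr ⟨k, A, B, ?_, rfl⟩)
    rwa [← mem_indepTuples_restrict_compl_loopSet_iff hA,
      ← mem_indepTuples_restrict_compl_loopSet_iff hB]

end Ideal

theorem qIdeal_indep_eq_freeProd_general (E : Type) [Fintype E]
    (M : Matroid E) :
    qIdeal E (indepTuples M) = TwoSidedIdeal.span (symRels E ∪ freeProdGens E M) :=
  le_antisymm
    (TwoSidedIdeal.span_le.2 <| Set.union_subset
      (fun _ hx => TwoSidedIdeal.subset_span (Or.inl hx))
      (tupleGens_indepTuples_subset_span_freeProdGens M))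
    (TwoSidedIdeal.span_le.2 <| Set.union_subset
      (fun _ hx => TwoSidedIdeal.subset_span (Or.inl hx))
      (freeProdGens_subset_qIdeal M))

/-- `I(QAut_ℐ(M))` equals the ideal of `𝔖⁺(E)` generated by the
`u_{ij}` with exactly one of `i, j` a loop, together with the `u_{AB}` for tuples over
`E∖L` with exactly one of `A`, `B` an independent tuple of `M∖L`; in other words,
`QAut_ℐ(M) = 𝔖⁺(L) * QAut_ℐ(M∖L)`. -/
theorem qIdeal_indep_eq_freeProd (E : Type) [Fintype E] [Nonempty E]
    (M : Matroid E) (hM : M.E = Set.univ) :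
    qIdeal E (indepTuples M) = TwoSidedIdeal.span (symRels E ∪ freeProdGens E M) :=
  qIdeal_indep_eq_freeProd_general E M

end
end

section
/- Let M be a rank-1 matroid on a nonempty finite ground set E with loop set L. Then the defining ideal I(QAut_ℐ(M)) equals the two-sided ideal of 𝔖⁺(E) generated by the elements u_{ij} with exactly one of i, j lying in L; in other words, QAut_ℐ(M) is the free product 𝔖⁺(L) * 𝔖⁺(E∖L) of quantum symmetric groups. -/
/-!
An independent tuple has distinct entries spanning an independent set, so its length is at most
the rank. In rank at most one the only independent tuples are therefore the empty tuple, which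
never contributes a generator `u_{AB}` (both sides are independent), and the one-element tuples
`(i)` with `i` not a loop. Hence the generators `u_{AB}` of `I(QAut_ℐ(M))` are exactly the
`u_{ij}` with exactly one of `i, j` a loop.
-/

noncomputable section

lemma length_le_eRank_of_mem_indepTuples {E : Type} {M : Matroid E} {k : ℕ} {A : Fin k → E}
    (hA : (⟨k, A⟩ : Tup E) ∈ indepTuples M) : (k : ℕ∞) ≤ M.eRank := by
  obtain ⟨hinj, hindep⟩ := hA
  calc (k : ℕ∞) = ENat.card (Fin k) := by simp
    _ ≤ (Set.range A).encard := hinj.encard_range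
    _ ≤ M.eRank := hindep.encard_le_eRank

lemma nil_mem_indepTuples {E : Type} (M : Matroid E) (A : Fin 0 → E) :
    (⟨0, A⟩ : Tup E) ∈ indepTuples M :=
  ⟨Function.injective_of_subsingleton A, by simp⟩

lemma singleton_mem_indepTuples_iff {E : Type} (M : Matroid E) (A : Fin 1 → E) :
    (⟨1, A⟩ : Tup E) ∈ indepTuples M ↔ A 0 ∉ loopSet M := by
  simp [indepTuples, loopSet, Set.range_unique, Function.injective_of_subsingleton A]

lemma uProd_fin_one (E : Type) (A B : Fin 1 → E) : uProd E A B = u E (A 0) (B 0) := by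
  simp [uProd]

lemma tupleGens_indepTuples_of_eRank_le_one {E : Type} {M : Matroid E} (hM : M.eRank ≤ 1) :
    tupleGens E (indepTuples M) =
      {x | ∃ i j : E, Xor' (i ∈ loopSet M) (j ∈ loopSet M) ∧ x = u E i j} := by
  ext x
  constructor
  · rintro ⟨k, A, B, hxor, rfl⟩
    have hk : (k : ℕ∞) ≤ 1 := by
      rcases hxor with ⟨h, -⟩ | ⟨h, -⟩ <;> exact (length_le_eRank_of_mem_indepTuples h).trans hM
    obtain rfl | rfl : k = 0 ∨ k = 1 := by norm_cast at hk; omega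
    · simp [Xor', nil_mem_indepTuples] at hxor
    · refine ⟨A 0, B 0, ?_, uProd_fin_one E A B⟩
      simpa only [Xor', singleton_mem_indepTuples_iff, xor_not_not] using hxor
  · rintro ⟨i, j, hxor, rfl⟩
    refine ⟨1, fun _ => i, fun _ => j, ?_, (uProd_fin_one E (fun _ => i) (fun _ => j)).symm⟩
    simpa only [Xor', singleton_mem_indepTuples_iff, xor_not_not] using hxor

theorem qIdeal_indep_rank_one_general (E : Type) [Fintype E]
    (M : Matroid E)
    (hrank1 : ∃ B : Set E, M.IsBase B ∧ B.ncard = 1) :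
    qIdeal E (indepTuples M) = TwoSidedIdeal.span (symRels E ∪
      {x | ∃ i j : E, Xor' (i ∈ loopSet M) (j ∈ loopSet M) ∧ x = u E i j}) := by
  obtain ⟨B, hB, hB_card⟩ := hrank1
  have hrank : M.eRank ≤ 1 := by
    obtain ⟨b, rfl⟩ := Set.ncard_eq_one.mp hB_card
    simp [← hB.encard_eq_eRank]
  rw [qIdeal, tupleGens_indepTuples_of_eRank_le_one hrank]

/-- For a rank-1 matroid `M` with loop set `L`, `I(QAut_ℐ(M))` is the
ideal of `𝔖⁺(E)` generated by the `u_{ij}` with exactly one of `i, j` in `L`; in other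
words, `QAut_ℐ(M) = 𝔖⁺(L) * 𝔖⁺(E∖L)`. -/
theorem qIdeal_indep_rank_one (E : Type) [Fintype E] [Nonempty E]
    (M : Matroid E) (hM : M.E = Set.univ)
    (hrank1 : ∃ B : Set E, M.IsBase B ∧ B.ncard = 1) :
    qIdeal E (indepTuples M) = TwoSidedIdeal.span (symRels E ∪
      {x | ∃ i j : E, Xor' (i ∈ loopSet M) (j ∈ loopSet M) ∧ x = u E i j}) :=
  qIdeal_indep_rank_one_general E M hrank1

end
end

section
/- Let M be a loopless rank-2 matroid on a nonempty finite ground set E. Then the defining ideal I(QAut_ℬ(M)) equals the two-sided ideal of 𝔖⁺(E) generated by all products u_{ab}u_{cd} (a,b,c,d ∈ E) such that exactly one of the pairs {a,c}, {b,d} is a basis of M. Consequently QAut_ℬ(M) coincides with the quantum automorphism group (in Banica's sense) of the graph Γ₂[M] with vertex set E whose edges are the pairs of elements lying in distinct rank-1 flats of M. -/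
/-!
In rank 2 every basis tuple has length 2, so the generators `u_{AB}` of `I(QAut_ℬ(M))` are
exactly the products `u_{ab} u_{cd}` with exactly one of `{a, c}`, `{b, d}` a basis. For
nonloops `a`, `c`, the pair `{a, c}` is a basis iff `a ≠ c` and `{a, c}` is independent, i.e.
iff `cl {a} ≠ cl {c}`. Since the rank-1 flats are exactly the closures `cl {e}` of nonloops,
this is adjacency in `Γ₂[M]`.
-/

noncomputable section

/-- Basis tuples of a matroid: repetition-free tuples whose underlying set is a
basis. -/
def baseTuples {E : Type} (M : Matroid E) : Set (Tup E) :=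
  {T | Function.Injective T.2 ∧ M.IsBase (Set.range T.2)}

/-- A rank-1 flat: a flat possessing a basis of cardinality 1. -/
def Rank1Flat {E : Type} (M : Matroid E) (F : Set E) : Prop :=
  M.IsFlat F ∧ ∃ I : Set E, M.IsBasis I F ∧ I.ncard = 1

/-- Adjacency in the graph `Γ₂[M]`: two elements are adjacent iff they lie in distinct
rank-1 flats of `M`. -/
def graphAdj {E : Type} (M : Matroid E) (a c : E) : Prop :=
  ∃ F G : Set E, Rank1Flat M F ∧ Rank1Flat M G ∧ a ∈ F ∧ c ∈ G ∧ F ≠ G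

namespace Matroid

variable {α : Type*} {M : Matroid α} {a c : α}

lemma isBase_pair_iff_of_eRank_eq_two (hr : M.eRank = 2) :
    M.IsBase {a, c} ↔ a ≠ c ∧ M.Indep {a, c} := by
  refine ⟨fun hB ↦ ⟨?_, hB.indep⟩, fun ⟨hac, hI⟩ ↦ hI.isBase_of_eRk_ge (Set.toFinite _) ?_⟩
  · rintro rfl
    have h := hB.encard_eq_eRank
    simp [hr] at h
  · rw [hI.eRk_eq_encard, Set.encard_pair hac, hr]

lemma IsNonloop.closure_ne_closure_iff (ha : M.IsNonloop a) (hc : M.IsNonloop c) :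
    M.closure {a} ≠ M.closure {c} ↔ a ≠ c ∧ M.Indep {a, c} := by
  rw [ne_eq, ha.closure_eq_closure_iff_eq_or_dep hc]
  tauto

end Matroid

open Matroid

section

variable {E : Type} {M : Matroid E} {F : Set E} {a c : E}

lemma rank1Flat_iff : Rank1Flat M F ↔ ∃ e, M.IsNonloop e ∧ F = M.closure {e} := by
  refine ⟨fun ⟨hF, I, hIF, hI⟩ ↦ ?_, fun ⟨e, he, hFe⟩ ↦ ?_⟩
  · obtain ⟨e, rfl⟩ := Set.ncard_eq_one.mp hI
    exact ⟨e, indep_singleton.mp hIF.indep, hF.closure.symm.trans hIF.closure_eq_closure.symm⟩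
  · exact hFe ▸ ⟨isFlat_closure _, {e}, he.indep.isBasis_closure, Set.ncard_singleton e⟩

lemma Rank1Flat.eq_closure_of_mem (hF : Rank1Flat M F) (ha : M.IsNonloop a) (haF : a ∈ F) :
    F = M.closure {a} := by
  obtain ⟨e, -, rfl⟩ := rank1Flat_iff.mp hF
  exact (ha.closure_eq_of_mem_closure haF).symm

lemma graphAdj_iff_closure_ne (ha : M.IsNonloop a) (hc : M.IsNonloop c) :
    graphAdj M a c ↔ M.closure {a} ≠ M.closure {c} := by
  refine ⟨fun ⟨F, G, hF, hG, haF, hcG, hFG⟩ ↦ ?_, fun h ↦ ?_⟩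
  · rwa [← hF.eq_closure_of_mem ha haF, ← hG.eq_closure_of_mem hc hcG]
  · exact ⟨_, _, rank1Flat_iff.mpr ⟨a, ha, rfl⟩, rank1Flat_iff.mpr ⟨c, hc, rfl⟩,
      M.mem_closure_self a ha.mem_ground, M.mem_closure_self c hc.mem_ground, h⟩

lemma graphAdj_iff_isBase_pair (hr : M.eRank = 2) (ha : M.IsNonloop a) (hc : M.IsNonloop c) :
    graphAdj M a c ↔ M.IsBase {a, c} := by
  rw [graphAdj_iff_closure_ne ha hc, ha.closure_ne_closure_iff hc,
    isBase_pair_iff_of_eRank_eq_two hr]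

lemma length_eq_eRank_of_mem_baseTuples {T : Tup E} (hT : T ∈ baseTuples M) :
    (T.1 : ℕ∞) = M.eRank := by
  rw [← hT.2.encard_eq_eRank, ← Set.image_univ, hT.1.encard_image, Set.encard_univ,
    ENat.card_eq_coe_fintype_card, Fintype.card_fin]

lemma mem_baseTuples_pair (hr : M.eRank = 2) :
    (⟨2, ![a, c]⟩ : Tup E) ∈ baseTuples M ↔ M.IsBase {a, c} := by
  simp only [baseTuples, Set.mem_ofPred_eq, Matrix.range_cons_cons_empty]
  refine ⟨And.right, fun hB ↦ ⟨?_, hB⟩⟩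
  have hac := ((isBase_pair_iff_of_eRank_eq_two hr).mp hB).1
  intro i j hij
  fin_cases i <;> fin_cases j <;> simp_all [eq_comm]

end

section

variable {E : Type} {𝒜 : Set (Tup E)}

lemma uProd_pair (a b c d : E) : uProd E ![a, c] ![b, d] = u E a b * u E c d := by
  simp [uProd, List.ofFn_succ]

lemma tupleGens_of_forall_length_eq_two (h𝒜 : ∀ T ∈ 𝒜, T.1 = 2) :
    tupleGens E 𝒜 = {x | ∃ a b c d : E,
      Xor' (⟨2, ![a, c]⟩ ∈ 𝒜) (⟨2, ![b, d]⟩ ∈ 𝒜) ∧ x = u E a b * u E c d} := by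
  ext x
  constructor
  · rintro ⟨k, A, B, hAB, rfl⟩
    obtain rfl : k = 2 := by
      rcases hAB with ⟨hA, -⟩ | ⟨hB, -⟩
      exacts [h𝒜 _ hA, h𝒜 _ hB]
    obtain ⟨a, c, rfl⟩ : ∃ a c, A = ![a, c] := ⟨A 0, A 1, (FinVec.etaExpand_eq A).symm⟩
    obtain ⟨b, d, rfl⟩ : ∃ b d, B = ![b, d] := ⟨B 0, B 1, (FinVec.etaExpand_eq B).symm⟩
    exact ⟨a, b, c, d, hAB, uProd_pair a b c d⟩
  · rintro ⟨a, b, c, d, hxor, rfl⟩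
    exact ⟨2, ![a, c], ![b, d], hxor, (uProd_pair a b c d).symm⟩

end

theorem qIdeal_base_rank_two_general (E : Type) [Fintype E]
    (M : Matroid E)
    (hloopless : ∀ x : E, M.Indep {x})
    (hrank2 : ∃ B : Set E, M.IsBase B ∧ B.ncard = 2) :
    qIdeal E (baseTuples M) = TwoSidedIdeal.span (symRels E ∪
      {x | ∃ a b c d : E,
        Xor' (M.IsBase {a, c}) (M.IsBase {b, d}) ∧ x = u E a b * u E c d}) ∧
    qIdeal E (baseTuples M) = TwoSidedIdeal.span (symRels E ∪
      {x | ∃ a b c d : E,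
        Xor' (graphAdj M a c) (graphAdj M b d) ∧ x = u E a b * u E c d}) := by
  have hr : M.eRank = 2 := by
    obtain ⟨B, hB, hB2⟩ := hrank2
    rw [← hB.encard_eq_eRank, ← (Set.toFinite B).cast_ncard_eq, hB2]
    rfl
  have hgens : tupleGens E (baseTuples M) = {x | ∃ a b c d : E,
      Xor' (M.IsBase {a, c}) (M.IsBase {b, d}) ∧ x = u E a b * u E c d} := by
    rw [tupleGens_of_forall_length_eq_two fun T hT ↦ by
      exact_mod_cast (length_eq_eRank_of_mem_baseTuples hT).trans hr]
    simp_rw [mem_baseTuples_pair hr]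
  have hadj (a c : E) : graphAdj M a c ↔ M.IsBase {a, c} :=
    graphAdj_iff_isBase_pair hr (indep_singleton.mp (hloopless a))
      (indep_singleton.mp (hloopless c))
  refine ⟨by rw [qIdeal, hgens], ?_⟩
  simp_rw [qIdeal, hgens, hadj]

/-- For a loopless rank-2 matroid `M`, `I(QAut_ℬ(M))` is the ideal of
`𝔖⁺(E)` generated by the products `u_{ab}u_{cd}` with exactly one of `{a,c}`, `{b,d}` a
basis of `M`; consequently `QAut_ℬ(M)` is the quantum automorphism group of the graph
`Γ₂[M]` whose edges are the pairs lying in distinct rank-1 flats. -/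
theorem qIdeal_base_rank_two (E : Type) [Fintype E] [Nonempty E]
    (M : Matroid E) (hM : M.E = Set.univ)
    (hloopless : ∀ x : E, M.Indep {x})
    (hrank2 : ∃ B : Set E, M.IsBase B ∧ B.ncard = 2) :
    qIdeal E (baseTuples M) = TwoSidedIdeal.span (symRels E ∪
      {x | ∃ a b c d : E,
        Xor' (M.IsBase {a, c}) (M.IsBase {b, d}) ∧ x = u E a b * u E c d}) ∧
    qIdeal E (baseTuples M) = TwoSidedIdeal.span (symRels E ∪
      {x | ∃ a b c d : E,
        Xor' (graphAdj M a c) (graphAdj M b d) ∧ x = u E a b * u E c d}) :=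
  qIdeal_base_rank_two_general E M hloopless hrank2

end
end

section
/- Let M be a matroid on a nonempty finite ground set E such that every circuit of M has at least 4 elements (i.e. girth(M) ≥ 4). Then the bases quantum automorphism group QAut_ℬ(M) is commutative: u_{ab}u_{cd} = u_{cd}u_{ab} holds in QAut_ℬ(M) for all a,b,c,d ∈ E. (Hence QAut_ℬ(M) = QAut_ℐ(M) = C(Aut(M)).) -/
/-!
STATEMENT 13: Let M be a matroid on a nonempty finite ground set E such that every
circuit of M has at least 4 elements (girth(M) ≥ 4).  Then QAut_ℬ(M) is commutative:
u_{ab}u_{cd} = u_{cd}u_{ab} in QAut_ℬ(M) for all a,b,c,d ∈ E.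
(Hence QAut_ℬ(M) = QAut_ℐ(M) = C(Aut(M)).)

We model a matroid on E as a Mathlib `Matroid E` with ground set all of `E`, and the
defining ideal of QAut_ℬ(M) (an ideal of 𝔖⁺(E)) by its preimage `qIdeal E 𝒜` in ℂ⟨E²⟩,
where `𝒜` is the set of basis tuples.  An equation `x = y` in QAut_ℬ(M) is the
membership `x - y ∈ qIdeal E 𝒜`.  Circuits are the minimal dependent sets.
-/

noncomputable section

/-- A circuit of a matroid: a minimal dependent set. -/
def IsCircuitSet {E : Type} (M : Matroid E) (C : Set E) : Prop :=
  ¬ M.Indep C ∧ ∀ a ∈ C, M.Indep (C \ {a})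

/-!
In `QAut_ℬ(M)` the generators `u_{ij}` satisfy the orthogonality and sum relations of a magic
unitary. Expanding `1 = ∑_z u_{az}` on the right of `u_{ab}u_{cd}` and on the left of
`u_{cd}u_{ab}` shows that both equal `u_{ab}u_{cd}u_{ab}`, provided `u_{ab}u_{cd}u_{az} = 0`
whenever `b, d, z` are distinct. Girth at least `4` makes `{b, d, z}` independent; extending it
to a basis and inserting `1 = ∏_y ∑_w u_{wy}` over the remaining basis elements `y` writes
`u_{ab}u_{cd}u_{az}` as a sum of products `u_{AB}` in which `B` is a basis tuple while `A`
repeats `a`, and these vanish by definition of `QAut_ℬ(M)`.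
-/

open Function

/-- The relations of a magic unitary other than its entries being projections. -/
structure IsMagicUnitary {R E : Type*} [Ring R] [Fintype E] (p : E → E → R) : Prop where
  row_orth : ∀ i {k l}, k ≠ l → p i k * p i l = 0
  col_orth : ∀ j {k l}, k ≠ l → p k j * p l j = 0
  row_sum : ∀ i, ∑ k, p i k = 1
  col_sum : ∀ j, ∑ k, p k j = 1

namespace IsMagicUnitary

variable {R E : Type*} [Ring R] [Fintype E] {p : E → E → R}

theorem eq_zero_of_forall_mul_ofFn_prod_eq_zero (hp : IsMagicUnitary p) {r : ℕ}
    (z : Fin r → E) {x : R}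
    (h : ∀ w : Fin r → E, x * (List.ofFn fun t => p (w t) (z t)).prod = 0) : x = 0 := by
  induction r generalizing x with
  | zero => simpa using h Fin.elim0
  | succ r ih =>
    have hx : ∀ v, x * p v (z 0) = 0 := fun v =>
      ih (Fin.tail z) fun w => by
        simpa [List.ofFn_succ, mul_assoc, Fin.tail] using h (Fin.cons v w)
    calc x = x * ∑ v, p v (z 0) := by rw [hp.col_sum, mul_one]
      _ = 0 := by simp only [Finset.mul_sum, hx, Finset.sum_const_zero]

variable (hp : IsMagicUnitary p)
  (hvanish : ∀ a c {b d z}, b ≠ d → b ≠ z → d ≠ z → p a b * p c d * p a z = 0)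
include hp hvanish

theorem mul_eq_mul_mul_self {a b c d : E} (hac : a ≠ c) (hbd : b ≠ d) :
    p a b * p c d = p a b * p c d * p a b := by
  calc p a b * p c d = p a b * p c d * ∑ z, p a z := by rw [hp.row_sum, mul_one]
    _ = p a b * p c d * p a b := by
      rw [Finset.mul_sum]
      refine Finset.sum_eq_single b (fun z _ hzb => ?_) (by simp)
      by_cases hzd : z = d
      · rw [hzd, mul_assoc, hp.col_orth d hac.symm, mul_zero]
      · exact hvanish a c hbd (Ne.symm hzb) (Ne.symm hzd)

theorem mul_eq_mul_mul_self' {a b c d : E} (hac : a ≠ c) (hbd : b ≠ d) :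
    p c d * p a b = p a b * p c d * p a b := by
  calc p c d * p a b = (∑ z, p a z) * (p c d * p a b) := by rw [hp.row_sum, one_mul]
    _ = p a b * (p c d * p a b) := by
      rw [Finset.sum_mul]
      refine Finset.sum_eq_single b (fun z _ hzb => ?_) (by simp)
      rw [← mul_assoc]
      by_cases hzd : z = d
      · rw [hzd, hp.col_orth d hac, zero_mul]
      · exact hvanish a c hzd hzb hbd.symm
    _ = p a b * p c d * p a b := (mul_assoc _ _ _).symm

theorem commute (a b c d : E) : Commute (p a b) (p c d) := by
  by_cases hac : a = c
  · subst hac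
    by_cases hbd : b = d
    · subst hbd; exact Commute.refl _
    · exact (hp.row_orth a hbd).trans (hp.row_orth a (Ne.symm hbd)).symm
  by_cases hbd : b = d
  · subst hbd
    exact (hp.col_orth b hac).trans (hp.col_orth b (Ne.symm hac)).symm
  exact (hp.mul_eq_mul_mul_self hvanish hac hbd).trans
    (hp.mul_eq_mul_mul_self' hvanish hac hbd).symm

end IsMagicUnitary

theorem Matroid.indep_of_ncard_lt_of_forall_isCircuitSet {E : Type} {M : Matroid E} {k : ℕ}
    (hgirth : ∀ C, IsCircuitSet M C → k ≤ C.ncard) {s : Set E} (hs : s.Finite)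
    (hsk : s.ncard < k) : M.Indep s := by
  induction hn : s.ncard using Nat.strong_induction_on generalizing s with
  | _ n ih =>
    by_contra hdep
    have hdel : ∀ a ∈ s, M.Indep (s \ {a}) := fun a ha =>
      ih _ (hn ▸ Set.ncard_sdiff_singleton_lt_of_mem ha hs) hs.sdiff
        ((Set.ncard_sdiff_singleton_lt_of_mem ha hs).trans hsk) rfl
    exact (hgirth s ⟨hdep, hdel⟩).not_gt hsk

theorem TwoSidedIdeal.ringCon_mk'_eq_zero_iff {R : Type*} [Ring R] (I : TwoSidedIdeal R)
    {x : R} : I.ringCon.mk' x = 0 ↔ x ∈ I := by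
  rw [← TwoSidedIdeal.mem_ker, TwoSidedIdeal.ker_ringCon_mk']

theorem Fin.range_append {α : Type*} {m n : ℕ} (a : Fin m → α) (b : Fin n → α) :
    Set.range (Fin.append a b) = Set.range a ∪ Set.range b := by
  ext x
  constructor
  · rintro ⟨i, rfl⟩
    induction i using Fin.addCases <;> simp
  · rintro (⟨i, rfl⟩ | ⟨i, rfl⟩)
    · exact ⟨Fin.castAdd n i, Fin.append_left a b i⟩
    · exact ⟨Fin.natAdd m i, Fin.append_right a b i⟩

theorem uProd_append {E : Type} {m n : ℕ} (A B : Fin m → E) (C D : Fin n → E) :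
    uProd E (Fin.append A C) (Fin.append B D) = uProd E A B * uProd E C D := by
  simp [uProd, List.ofFn_add, List.prod_append]

section QAut

variable {E : Type} [Fintype E]

theorem isMagicUnitary_mk'_u (𝒜 : Set (Tup E)) :
    IsMagicUnitary fun i j => (qIdeal E 𝒜).ringCon.mk' (u E i j) := by
  have hrel : ∀ x ∈ symRels E, (qIdeal E 𝒜).ringCon.mk' x = 0 := fun x hx =>
    (TwoSidedIdeal.ringCon_mk'_eq_zero_iff _).2 (TwoSidedIdeal.subset_span (Or.inl hx))
  refine ⟨fun i k l hkl => ?_, fun j k l hkl => ?_, fun i => ?_, fun j => ?_⟩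
  · simpa using hrel _ (Or.inl <| Or.inl <| Or.inl <| Or.inr ⟨i, k, l, hkl, rfl⟩)
  · simpa using hrel _ (Or.inl <| Or.inl <| Or.inr ⟨j, k, l, hkl, rfl⟩)
  · simpa [sub_eq_zero] using hrel _ (Or.inr ⟨i, rfl⟩)
  · simpa [sub_eq_zero] using hrel _ (Or.inl <| Or.inr ⟨j, rfl⟩)

theorem mk'_uProd (𝒜 : Set (Tup E)) {k : ℕ} (A B : Fin k → E) :
    (qIdeal E 𝒜).ringCon.mk' (uProd E A B)
      = (List.ofFn fun t => (qIdeal E 𝒜).ringCon.mk' (u E (A t) (B t))).prod := by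
  simp [uProd, map_list_prod, List.map_ofFn, Function.comp_def]

theorem uProd_mem_qIdeal_of_not_injective (M : Matroid E) {k : ℕ} {A B : Fin k → E}
    (hA : ¬ Injective A) (hB : Injective B) (hBi : M.Indep (Set.range B)) :
    uProd E A B ∈ qIdeal E (baseTuples M) := by
  obtain ⟨S, hS, hBS⟩ := hBi.exists_isBase_superset
  obtain ⟨r, z, hz⟩ := (S \ Set.range B).toFinite.fin_embedding
  rw [← TwoSidedIdeal.ringCon_mk'_eq_zero_iff, mk'_uProd]
  refine (isMagicUnitary_mk'_u _).eq_zero_of_forall_mul_ofFn_prod_eq_zero z fun w => ?_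
  rw [← mk'_uProd, ← mk'_uProd, ← map_mul, ← uProd_append,
    TwoSidedIdeal.ringCon_mk'_eq_zero_iff]
  refine TwoSidedIdeal.subset_span (Or.inr ⟨_, _, _, Or.inr ⟨⟨?_, ?_⟩, ?_⟩, rfl⟩)
  · refine Fin.append_injective_iff.2 ⟨hB, z.injective, fun i j hij => ?_⟩
    have hzj : z j ∈ S \ Set.range B := hz ▸ Set.mem_range_self j
    exact hzj.2 ⟨i, hij⟩
  · rwa [Fin.range_append, hz, Set.union_sdiff_cancel hBS]
  · exact fun h => hA (Fin.append_injective_iff.1 h.1).1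

theorem u_mul_u_mul_u_mem_qIdeal_of_girth_ge_four (M : Matroid E)
    (hgirth : ∀ C, IsCircuitSet M C → 4 ≤ C.ncard) (a c : E) {b d z : E}
    (hbd : b ≠ d) (hbz : b ≠ z) (hdz : d ≠ z) :
    u E a b * u E c d * u E a z ∈ qIdeal E (baseTuples M) := by
  have hA : ¬ Injective ![a, c, a] := fun h => absurd (@h 0 2 rfl) (by decide)
  have hB : Injective ![b, d, z] := by
    intro i j h
    fin_cases i <;> fin_cases j <;> simp_all [eq_comm]
  have hBi : M.Indep (Set.range ![b, d, z]) :=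
    Matroid.indep_of_ncard_lt_of_forall_isCircuitSet hgirth (Set.finite_range _)
      (by rw [Set.ncard_range_of_injective hB]; simp)
  simpa [uProd, List.ofFn_succ, mul_assoc] using
    uProd_mem_qIdeal_of_not_injective M hA hB hBi

end QAut

theorem qIdeal_base_commutative_of_girth_ge_four_general (E : Type) [Fintype E]
    (M : Matroid E)
    (hgirth : ∀ C : Set E, IsCircuitSet M C → 4 ≤ C.ncard) :
    ∀ a b c d : E,
      u E a b * u E c d - u E c d * u E a b ∈ qIdeal E (baseTuples M) := by
  intro a b c d
  rw [← TwoSidedIdeal.ringCon_mk'_eq_zero_iff, map_sub, map_mul, map_mul, sub_eq_zero]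
  refine ((isMagicUnitary_mk'_u _).commute (fun a c b d z hbd hbz hdz => ?_) a b c d).eq
  simpa using (TwoSidedIdeal.ringCon_mk'_eq_zero_iff _).2
    (u_mul_u_mul_u_mem_qIdeal_of_girth_ge_four M hgirth a c hbd hbz hdz)

/-- If every circuit of `M` has at least 4 elements, then the bases
quantum automorphism group `QAut_ℬ(M)` is commutative:
`u_{ab}u_{cd} = u_{cd}u_{ab}` in `QAut_ℬ(M)` for all `a, b, c, d ∈ E`
(hence `QAut_ℬ(M) = QAut_ℐ(M) = C(Aut(M))`). -/
theorem qIdeal_base_commutative_of_girth_ge_four (E : Type) [Fintype E] [Nonempty E]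
    (M : Matroid E) (hM : M.E = Set.univ)
    (hgirth : ∀ C : Set E, IsCircuitSet M C → 4 ≤ C.ncard) :
    ∀ a b c d : E,
      u E a b * u E c d - u E c d * u E a b ∈ qIdeal E (baseTuples M) :=
  qIdeal_base_commutative_of_girth_ge_four_general E M hgirth
end
end

section
/- Two matroids M₁ and M₂ on nonempty finite ground sets are isomorphic if and only if there exist a surjective strong map φ₁ : M₁ → M₂ and a surjective strong map φ₂ : M₂ → M₁. -/
/-!
An isomorphism `σ` yields the surjective strong maps `Option.map σ` and `Option.map σ.symm`.
Conversely, surjections in both directions between the finite sets `E(Mᵢ) ∪ {e}` are bijections,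
and a bijective strong map fixes the loop, so it is `Option.map` of a bijection of the ground
sets whose preimage map sends flats to flats injectively. There are finitely many flats, so these
injections in both directions are bijections: the bijection of ground sets matches the flats
exactly, and a matroid is determined by its flats.
-/

/-- Matroid isomorphism (for matroids whose ground set is the whole type):
a bijection of the ground sets mapping bases to bases, whose inverse also maps
bases to bases. -/
def MatroidIso {α β : Type} (M : Matroid α) (N : Matroid β) : Prop :=
  ∃ e : α ≃ β, ∀ B : Set α, M.IsBase B ↔ N.IsBase (e '' B)

/-- A strong map `M → N`: a function `φ` on the ground sets with the loop `e = none`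
adjoined, fixing `e`, such that the preimage of every flat of `N∘` is a flat of `M∘`. -/
def IsStrongMap {α β : Type} (M : Matroid α) (N : Matroid β)
    (φ : Option α → Option β) : Prop :=
  φ none = none ∧
  ∀ F : Set β, N.IsFlat F →
    M.IsFlat {x : α | φ (some x) ∈ insert none (Option.some '' F)}

open Set Function

lemma Function.Surjective.bijective_and_bijective_of_surjective {α β : Type*} [Finite α]
    {f : α → β} {g : β → α} (hf : Surjective f) (hg : Surjective g) :
    Bijective f ∧ Bijective g :=
  have := Finite.of_surjective f hf
  ⟨hf.bijective_of_nat_card_le (Nat.card_le_card_of_surjective g hg),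
    hg.bijective_of_nat_card_le (Nat.card_le_card_of_surjective f hf)⟩

lemma Option.exists_equiv_map_eq {α β : Type*} {φ : Option α → Option β} (hφ : Bijective φ)
    (h0 : φ none = none) : ∃ e : α ≃ β, Option.map e = φ := by
  let Φ := Equiv.ofBijective φ hφ
  refine ⟨Equiv.removeNone Φ, funext fun x ↦ ?_⟩
  cases x with
  | none => exact h0.symm
  | some a =>
    have hne : φ (some a) ≠ none := fun h ↦ by simpa using hφ.1 (h.trans h0.symm)
    exact Equiv.removeNone_some Φ (Option.ne_none_iff_exists'.1 hne)

namespace Matroid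

variable {α β : Type*} {M : Matroid α} {N : Matroid β}

lemma IsFlat.mapEquiv {F : Set α} (hF : M.IsFlat F) (e : α ≃ β) :
    (M.mapEquiv e).IsFlat (e '' F) := by
  refine ⟨fun I X hI hX ↦ ?_, image_mono hF.subset_ground⟩
  rw [mapEquiv_isBasis_iff, e.symm_image_image] at hI
  rw [mapEquiv_isBasis_iff] at hX
  rw [e.image_eq_preimage_symm, ← image_subset_iff]
  exact hF.subset_of_isBasis_of_isBasis hI hX

lemma mapEquiv_mapEquiv_symm (M : Matroid α) (e : α ≃ β) :
    (M.mapEquiv e).mapEquiv e.symm = M :=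
  ext_indep (by simp) fun I _ ↦ by simp

lemma isFlat_mapEquiv_iff (e : α ≃ β) {F : Set β} :
    (M.mapEquiv e).IsFlat F ↔ M.IsFlat (e ⁻¹' F) := by
  rw [← e.image_symm_eq_preimage]
  refine ⟨fun hF ↦ ?_, fun hF ↦ ?_⟩
  · simpa only [mapEquiv_mapEquiv_symm] using hF.mapEquiv e.symm
  · simpa using hF.mapEquiv e

lemma ext_isFlat {M₁ M₂ : Matroid α} (hE : M₁.E = M₂.E)
    (h : ∀ F, M₁.IsFlat F ↔ M₂.IsFlat F) : M₁ = M₂ :=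
  ext_closure fun X ↦ by simp only [closure_def, hE, h]

lemma mapEquiv_eq_iff_isBase {e : α ≃ β} (hE : e '' M.E = N.E) :
    M.mapEquiv e = N ↔ ∀ B, M.IsBase B ↔ N.IsBase (e '' B) := by
  refine ⟨fun h B ↦ by simp [← h], fun h ↦ ext_isBase hE fun B _ ↦ ?_⟩
  rw [mapEquiv_isBase_iff, h, e.image_symm_image]

lemma mapEquiv_eq_iff_isFlat {e : α ≃ β} (hE : e '' M.E = N.E) :
    M.mapEquiv e = N ↔ ∀ F, M.IsFlat (e ⁻¹' F) ↔ N.IsFlat F := by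
  refine ⟨fun h F ↦ by rw [← h, isFlat_mapEquiv_iff], fun h ↦ ext_isFlat hE fun F ↦ ?_⟩
  rw [isFlat_mapEquiv_iff, h]

lemma isFlat_preimage_iff_of_surjective [Finite α] {f : α → β} {g : β → α}
    (hf : Surjective f) (hg : Surjective g)
    (hfM : ∀ F, N.IsFlat F → M.IsFlat (f ⁻¹' F)) (hgN : ∀ G, M.IsFlat G → N.IsFlat (g ⁻¹' G))
    (F : Set β) : M.IsFlat (f ⁻¹' F) ↔ N.IsFlat F := by
  have := Finite.of_surjective f hf
  let u : {F // N.IsFlat F} → {G // M.IsFlat G} := fun F ↦ ⟨f ⁻¹' F, hfM F F.2⟩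
  let v : {G // M.IsFlat G} → {F // N.IsFlat F} := fun G ↦ ⟨g ⁻¹' G, hgN G G.2⟩
  have hu : Injective u := fun F F' h ↦ Subtype.ext (hf.preimage_injective congr($h.1))
  have hv : Injective v := fun G G' h ↦ Subtype.ext (hg.preimage_injective congr($h.1))
  refine ⟨fun hF ↦ ?_, hfM F⟩
  obtain ⟨F', hF'⟩ := (hu.bijective_of_nat_card_le (Nat.card_le_card_of_injective v hv)).2 ⟨_, hF⟩
  rw [← hf.preimage_injective congr($hF'.1)]
  exact F'.2

end Matroid

lemma matroidIso_iff_exists_isFlat_preimage_iff {α β : Type} {M : Matroid α} {N : Matroid β}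
    (hM : M.E = univ) (hN : N.E = univ) :
    MatroidIso M N ↔ ∃ e : α ≃ β, ∀ F, M.IsFlat (e ⁻¹' F) ↔ N.IsFlat F := by
  have hE (e : α ≃ β) : e '' M.E = N.E := by simp [hM, hN]
  simp only [MatroidIso, ← Matroid.mapEquiv_eq_iff_isBase (hE _),
    Matroid.mapEquiv_eq_iff_isFlat (hE _)]

lemma isStrongMap_optionMap_iff {α β : Type} {M : Matroid α} {N : Matroid β} (f : α → β) :
    IsStrongMap M N (Option.map f) ↔ ∀ F, N.IsFlat F → M.IsFlat (f ⁻¹' F) := by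
  simp [IsStrongMap, preimage]

theorem matroidIso_iff_surj_strongMaps_general {α β : Type}
    [Fintype α]
    (M₁ : Matroid α) (M₂ : Matroid β) (h₁ : M₁.E = Set.univ) (h₂ : M₂.E = Set.univ) :
    MatroidIso M₁ M₂ ↔
      ((∃ φ : Option α → Option β, IsStrongMap M₁ M₂ φ ∧ Function.Surjective φ) ∧
       (∃ ψ : Option β → Option α, IsStrongMap M₂ M₁ ψ ∧ Function.Surjective ψ)) := by
  rw [matroidIso_iff_exists_isFlat_preimage_iff h₁ h₂]
  constructor
  · rintro ⟨e, he⟩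
    refine ⟨⟨_, (isStrongMap_optionMap_iff e).2 fun F ↦ (he F).2, e.optionCongr.surjective⟩,
      ⟨_, (isStrongMap_optionMap_iff e.symm).2 fun G hG ↦ (he _).1 ?_,
        e.symm.optionCongr.surjective⟩⟩
    rwa [e.preimage_symm_preimage]
  · rintro ⟨⟨φ, hφ, hφs⟩, ⟨ψ, hψ, hψs⟩⟩
    obtain ⟨hφb, hψb⟩ := hφs.bijective_and_bijective_of_surjective hψs
    obtain ⟨e, rfl⟩ := Option.exists_equiv_map_eq hφb hφ.1
    obtain ⟨g, rfl⟩ := Option.exists_equiv_map_eq hψb hψ.1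
    rw [isStrongMap_optionMap_iff] at hφ hψ
    exact ⟨e, Matroid.isFlat_preimage_iff_of_surjective e.surjective g.surjective hφ hψ⟩

/-- Two matroids on nonempty finite ground sets are isomorphic iff
there are surjective strong maps in both directions. -/
theorem matroidIso_iff_surj_strongMaps {α β : Type}
    [Fintype α] [Nonempty α] [Fintype β] [Nonempty β]
    (M₁ : Matroid α) (M₂ : Matroid β) (h₁ : M₁.E = Set.univ) (h₂ : M₂.E = Set.univ) :
    MatroidIso M₁ M₂ ↔
      ((∃ φ : Option α → Option β, IsStrongMap M₁ M₂ φ ∧ Function.Surjective φ) ∧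
       (∃ ψ : Option β → Option α, IsStrongMap M₂ M₁ ψ ∧ Function.Surjective ψ)) :=
  matroidIso_iff_surj_strongMaps_general M₁ M₂ h₁ h₂
end
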